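/- arXiv:1208.1155 — 11 statements merged into one kernel-verified Lean document; each statement's English description precedes it below -/
import Mathlib

section
/- Let Y ⊆ ℝ^N be an open set and F : Y → ℝ a smooth function whose Hessian D²F(x) is a nondegenerate symmetric bilinear form for every x ∈ Y. Suppose F satisfies the parallel cubic form PDE on Y. For x ∈ Y define the product K_x(u,v) ∈ ℝ^N of vectors u,v ∈ ℝ^N as the unique vector with D²F(x)[K_x(u,v), w] = -½·D³F(x)[u,v,w] for all w ∈ ℝ^N. Then for every x ∈ Y and all u,v ∈ ℝ^N the Jordan identity K_x(K_x(K_x(u,u),v),u) = K_x(K_x(u,v),K_x(u,u)) holds; that is, ℝ^N equipped with the commutative product (u,v) ↦ K_x(u,v) is a Jordan algebra. -/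
open Filter Function
open scoped Topology

namespace Stmt0

variable {N : ℕ} {Y : Set (Fin N → ℝ)} {F : (Fin N → ℝ) → ℝ} {x : Fin N → ℝ}

/-- Basic differentiability of the iterated derivative with directional-derivative formula. -/
theorem key (hY : IsOpen Y) (hF : ContDiffOn ℝ (⊤ : ℕ∞) F Y) (hx : x ∈ Y) (n : ℕ)
    (m : Fin n → (Fin N → ℝ)) :
    ∃ L : (Fin N → ℝ) →L[ℝ] ℝ,
      HasFDerivAt (fun y => iteratedFDerivWithin ℝ n F Y y m) L x ∧
      ∀ e, L e = iteratedFDerivWithin ℝ (n + 1) F Y x (Fin.cons e m) := by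
  have hD : ContDiffWithinAt ℝ 1 (iteratedFDerivWithin ℝ n F Y) Y x :=
    (hF x hx).iteratedFDerivWithin_right hY.uniqueDiffOn (by exact_mod_cast le_top) hx
  have hdiff : DifferentiableAt ℝ (iteratedFDerivWithin ℝ n F Y) x :=
    ((hD.differentiableWithinAt one_ne_zero).differentiableAt (hY.mem_nhds hx))
  refine ⟨(ContinuousMultilinearMap.apply ℝ _ ℝ m).comp
      (fderivWithin ℝ (iteratedFDerivWithin ℝ n F Y) Y x), ?_, ?_⟩
  · have h1 : HasFDerivAt (iteratedFDerivWithin ℝ n F Y)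
        (fderivWithin ℝ (iteratedFDerivWithin ℝ n F Y) Y x) x := by
      rw [fderivWithin_of_isOpen hY hx]
      exact hdiff.hasFDerivAt
    exact ((ContinuousMultilinearMap.apply ℝ _ ℝ m).hasFDerivAt).comp x h1
  · intro e
    rw [iteratedFDerivWithin_succ_apply_left]
    simp


theorem symm2 (hY : IsOpen Y) (hF : ContDiffOn ℝ (⊤ : ℕ∞) F Y) (hx : x ∈ Y) (n : ℕ)
    (e a : Fin N → ℝ) (m : Fin n → (Fin N → ℝ)) :
    iteratedFDerivWithin ℝ (n + 2) F Y x (Fin.cons e (Fin.cons a m)) =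
      iteratedFDerivWithin ℝ (n + 2) F Y x (Fin.cons a (Fin.cons e m)) := by
  set f := iteratedFDerivWithin ℝ n F Y with hf
  set f' := fderivWithin ℝ f Y with hf'
  have hDn : ∀ y ∈ Y, DifferentiableAt ℝ f y := fun y hy =>
    (((hF y hy).iteratedFDerivWithin_right hY.uniqueDiffOn (by exact_mod_cast le_top) hy).differentiableWithinAt
      one_ne_zero).differentiableAt (hY.mem_nhds hy)
  have hev : ∀ᶠ y in 𝓝 x, HasFDerivAt f (f' y) y := by
    filter_upwards [hY.mem_nhds hx] with y hy
    rw [hf', fderivWithin_of_isOpen hY hy]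
    exact (hDn y hy).hasFDerivAt
  have hfY : ContDiffOn ℝ (⊤ : ℕ∞) f Y := fun y hy =>
    (hF y hy).iteratedFDerivWithin_right hY.uniqueDiffOn (by exact_mod_cast le_top) hy
  have hf'Y : ContDiffOn ℝ 1 f' Y := hfY.fderivWithin hY.uniqueDiffOn (WithTop.coe_le_coe.mpr le_top)
  have hf'diff : DifferentiableAt ℝ f' x :=
    ((hf'Y x hx).differentiableWithinAt one_ne_zero).differentiableAt (hY.mem_nhds hx)
  have hsymm := second_derivative_symmetric_of_eventually hev hf'diff.hasFDerivAt e a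
  -- identify the second derivative values
  have hval : ∀ b c : Fin N → ℝ, fderiv ℝ f' x b c m =
      iteratedFDerivWithin ℝ (n + 2) F Y x (Fin.cons b (Fin.cons c m)) := by
    intro b c
    obtain ⟨L, hL, hLe⟩ := key hY hF hx (n + 1) (Fin.cons c m)
    have hfun : (fun y => f' y c m) = fun y => iteratedFDerivWithin ℝ (n + 1) F Y y
        (Fin.cons c m) := by
      funext y
      rw [iteratedFDerivWithin_succ_apply_left]
      simp [hf', hf]
    set G : ((Fin N → ℝ) →L[ℝ] (ContinuousMultilinearMap ℝ
        (fun _ : Fin n => (Fin N → ℝ)) ℝ)) →L[ℝ] ℝ :=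
      (ContinuousMultilinearMap.apply ℝ _ ℝ m).comp
        (ContinuousLinearMap.apply ℝ _ c) with hG
    have h2 : HasFDerivAt (fun y => f' y c m) (G.comp (fderiv ℝ f' x)) x := by
      have h4 := (ContinuousMultilinearMap.apply ℝ _ ℝ m).hasFDerivAt.comp x
        (hf'diff.hasFDerivAt.clm_apply (hasFDerivAt_const c x))
      have h5 : G.comp (fderiv ℝ f' x) = (ContinuousMultilinearMap.apply ℝ _ ℝ m).comp
          ((f' x).comp (0 : (Fin N → ℝ) →L[ℝ] (Fin N → ℝ)) + (fderiv ℝ f' x).flip c) := by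
        ext b
        simp [hG]
      rw [h5]
      exact h4
    rw [hfun] at h2
    have := h2.unique hL
    have heval := congrFun (congrArg DFunLike.coe this) b
    simp only [ContinuousLinearMap.comp_apply, hG] at heval
    rw [hLe b] at heval
    simpa using heval
  rw [← hval e a, ← hval a e, hsymm]


theorem up2_0 (p q z : Fin N → ℝ) : Function.update ![p, q] 0 z = ![z, q] := by
  funext l; fin_cases l <;> simp

theorem lin2_0_add (g : ContinuousMultilinearMap ℝ (fun _ : Fin 2 => (Fin N → ℝ)) ℝ)
    (u v w : Fin N → ℝ) : g ![u + v, w] = g ![u, w] + g ![v, w] := by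
  simpa [up2_0] using g.map_update_add ![u, w] 0 u v

theorem lin2_0_smul (g : ContinuousMultilinearMap ℝ (fun _ : Fin 2 => (Fin N → ℝ)) ℝ)
    (c : ℝ) (u w : Fin N → ℝ) : g ![c • u, w] = c * g ![u, w] := by
  simpa [up2_0] using g.map_update_smul ![u, w] 0 c u

/-- The operator associated to a continuous bilinear form, `⟪T g u, w⟫ = g ![u, w]`. -/
noncomputable def Phi (N : ℕ) : (ContinuousMultilinearMap ℝ (fun _ : Fin 2 => (Fin N → ℝ)) ℝ)
    →L[ℝ] ((Fin N → ℝ) →L[ℝ] (Fin N → ℝ)) := by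
  refine LinearMap.mkContinuous
    { toFun := fun g => LinearMap.toContinuousLinearMap
        { toFun := fun u => fun i => g ![u, Pi.single i 1]
          map_add' := fun u v => by funext i; exact lin2_0_add g u v _
          map_smul' := fun c u => by funext i; exact lin2_0_smul g c u _ }
      map_add' := fun g h => by ext u i; simp
      map_smul' := fun c g => by ext u i; simp } 1 (fun g => ?_)
  refine ContinuousLinearMap.opNorm_le_bound _ (by positivity) fun u => ?_
  rw [show (1:ℝ) * ‖g‖ * ‖u‖ = ‖g‖ * ‖u‖ by ring]
  refine (pi_norm_le_iff_of_nonneg (by positivity)).2 fun i => ?_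
  show ‖g ![u, Pi.single i 1]‖ ≤ ‖g‖ * ‖u‖
  calc ‖g ![u, Pi.single i 1]‖ ≤ ‖g‖ * ∏ j, ‖(![u, Pi.single i 1] : Fin 2 → Fin N → ℝ) j‖ := g.le_opNorm _
    _ ≤ ‖g‖ * ‖u‖ := by
        rw [Fin.prod_univ_two]
        simp only [Matrix.cons_val_zero, Matrix.cons_val_one, Matrix.head_cons]
        have h1 : ‖(Pi.single i (1:ℝ) : Fin N → ℝ)‖ ≤ 1 := by
          refine (pi_norm_le_iff_of_nonneg zero_le_one).2 fun j => ?_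
          rcases eq_or_ne j i with rfl | hj
          · simp
          · simp [Pi.single_apply, hj]
        nlinarith [norm_nonneg u, g.opNorm_nonneg, norm_nonneg (Pi.single i (1:ℝ) : Fin N → ℝ), mul_le_of_le_one_right (norm_nonneg u) h1]

theorem isUnit_of_injective (T : (Fin N → ℝ) →L[ℝ] (Fin N → ℝ))
    (h : Function.Injective T) : IsUnit T := by
  have hbij : Function.Bijective (T : (Fin N → ℝ) →ₗ[ℝ] (Fin N → ℝ)) :=
    ⟨h, LinearMap.injective_iff_surjective.mp h⟩
  let e := LinearEquiv.ofBijective (T : (Fin N → ℝ) →ₗ[ℝ] (Fin N → ℝ)) hbij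
  let E := e.toContinuousLinearEquiv
  refine ⟨⟨T, E.symm.toContinuousLinearMap, ?_, ?_⟩, rfl⟩
  · ext v
    have : T (E.symm v) = E (E.symm v) := rfl
    simp [ContinuousLinearMap.mul_apply, this]
  · ext v
    have : T v = E v := rfl
    simp [ContinuousLinearMap.mul_apply, this]


theorem up2_1 (p q z : Fin N → ℝ) : Function.update ![p, q] 1 z = ![p, z] := by
  funext l; fin_cases l <;> simp
theorem up3_1 (p q r z : Fin N → ℝ) : Function.update ![p, q, r] 1 z = ![p, z, r] := by
  funext l; fin_cases l <;> simp
theorem up3_2 (p q r z : Fin N → ℝ) : Function.update ![p, q, r] 2 z = ![p, q, z] := by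
  funext l; fin_cases l <;> simp
theorem up4_3 (p q r s z : Fin N → ℝ) : Function.update ![p, q, r, s] 3 z = ![p, q, r, z] := by
  funext l; fin_cases l <;> simp

theorem expand (n : ℕ) (g : ContinuousMultilinearMap ℝ (fun _ : Fin n => (Fin N → ℝ)) ℝ)
    (m : Fin n → Fin N → ℝ) (j : Fin n) :
    g m = ∑ i : Fin N, m j i * g (Function.update m j (Pi.single i 1)) := by
  have hm : m j = ∑ i : Fin N, m j i • (Pi.single i 1 : Fin N → ℝ) := by
    funext l
    simp [Finset.sum_apply, Pi.single_apply, smul_eq_mul, mul_ite]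
  conv_lhs => rw [show m = Function.update m j (m j) by simp, hm]
  rw [show (g (Function.update m j (∑ i : Fin N, m j i • (Pi.single i 1 : Fin N → ℝ)))) =
      g.toMultilinearMap (Function.update m j
        (∑ i : Fin N, m j i • (Pi.single i 1 : Fin N → ℝ))) from rfl,
    g.toMultilinearMap.map_update_sum]
  refine Finset.sum_congr rfl fun i _ => ?_
  rw [g.toMultilinearMap.map_update_smul]
  simp

theorem exp2_0 (g : ContinuousMultilinearMap ℝ (fun _ : Fin 2 => (Fin N → ℝ)) ℝ)
    (p q : Fin N → ℝ) : g ![p, q] = ∑ i : Fin N, p i * g ![Pi.single i 1, q] := by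
  simpa [up2_0] using expand 2 g ![p, q] 0
theorem exp2_1 (g : ContinuousMultilinearMap ℝ (fun _ : Fin 2 => (Fin N → ℝ)) ℝ)
    (p q : Fin N → ℝ) : g ![p, q] = ∑ i : Fin N, q i * g ![p, Pi.single i 1] := by
  simpa [up2_1] using expand 2 g ![p, q] 1
theorem exp3_1 (g : ContinuousMultilinearMap ℝ (fun _ : Fin 3 => (Fin N → ℝ)) ℝ)
    (p q r : Fin N → ℝ) : g ![p, q, r] = ∑ i : Fin N, q i * g ![p, Pi.single i 1, r] := by
  simpa [up3_1] using expand 3 g ![p, q, r] 1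
theorem exp3_2 (g : ContinuousMultilinearMap ℝ (fun _ : Fin 3 => (Fin N → ℝ)) ℝ)
    (p q r : Fin N → ℝ) : g ![p, q, r] = ∑ i : Fin N, r i * g ![p, q, Pi.single i 1] := by
  simpa [up3_2] using expand 3 g ![p, q, r] 2
theorem exp4_3 (g : ContinuousMultilinearMap ℝ (fun _ : Fin 4 => (Fin N → ℝ)) ℝ)
    (p q r s : Fin N → ℝ) :
    g ![p, q, r, s] = ∑ i : Fin N, s i * g ![p, q, r, Pi.single i 1] := by
  simpa [up4_3] using expand 4 g ![p, q, r, s] 3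

theorem lin2_0_sub (g : ContinuousMultilinearMap ℝ (fun _ : Fin 2 => (Fin N → ℝ)) ℝ)
    (u v w : Fin N → ℝ) : g ![u - v, w] = g ![u, w] - g ![v, w] := by
  simpa [up2_0] using g.toMultilinearMap.map_update_sub ![u, w] 0 u v
theorem lin3_2_smul (g : ContinuousMultilinearMap ℝ (fun _ : Fin 3 => (Fin N → ℝ)) ℝ)
    (c : ℝ) (p q r : Fin N → ℝ) : g ![p, q, c • r] = c * g ![p, q, r] := by
  simpa [up3_2] using g.map_update_smul ![p, q, r] 2 c r
theorem lin3_2_sub (g : ContinuousMultilinearMap ℝ (fun _ : Fin 3 => (Fin N → ℝ)) ℝ)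
    (p q r r' : Fin N → ℝ) : g ![p, q, r - r'] = g ![p, q, r] - g ![p, q, r'] := by
  simpa [up3_2] using g.toMultilinearMap.map_update_sub ![p, q, r] 2 r r'

/-- The Hessian operator. -/
noncomputable def Tm (F : (Fin N → ℝ) → ℝ) (Y : Set (Fin N → ℝ)) (y : Fin N → ℝ) : (Fin N → ℝ) →L[ℝ] (Fin N → ℝ) :=
  Phi N (iteratedFDerivWithin ℝ 2 F Y y)

/-- The vector representing `D³F(y)[c,d,·]`. -/
noncomputable def sv (F : (Fin N → ℝ) → ℝ) (Y : Set (Fin N → ℝ)) (c d y : Fin N → ℝ) : Fin N → ℝ :=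
  fun i => iteratedFDerivWithin ℝ 3 F Y y ![c, d, Pi.single i 1]

/-- The product `k_y(c,d)`. -/
noncomputable def kp (F : (Fin N → ℝ) → ℝ) (Y : Set (Fin N → ℝ)) (c d y : Fin N → ℝ) : Fin N → ℝ :=
  (-(1:ℝ)/2) • Ring.inverse (Tm F Y y) (sv F Y c d y)

theorem hdot2 (y p q : Fin N → ℝ) :
    iteratedFDerivWithin ℝ 2 F Y y ![p, q] = ∑ i : Fin N, q i * Tm F Y y p i := by
  rw [exp2_1 (iteratedFDerivWithin ℝ 2 F Y y) p q]; rfl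

theorem hunit (hnd : ∀ x ∈ Y, ∀ u : Fin N → ℝ,
      (∀ v : Fin N → ℝ, iteratedFDerivWithin ℝ 2 F Y x ![u, v] = 0) → u = 0)
    {y : Fin N → ℝ} (hy : y ∈ Y) : IsUnit (Tm F Y y) := by
  refine isUnit_of_injective _ ?_
  have hker : ∀ z, Tm F Y y z = 0 → z = 0 := by
    intro z hz
    refine hnd y hy z fun w => ?_
    rw [hdot2 y z w, hz]
    simp
  intro z1 z2 h12
  have h0 : Tm F Y y (z1 - z2) = 0 := by rw [map_sub, h12, sub_self]
  exact sub_eq_zero.mp (hker _ h0)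

theorem Tinv_eval (hnd : ∀ x ∈ Y, ∀ u : Fin N → ℝ,
      (∀ v : Fin N → ℝ, iteratedFDerivWithin ℝ 2 F Y x ![u, v] = 0) → u = 0)
    {y : Fin N → ℝ} (hy : y ∈ Y) (z : Fin N → ℝ) :
    Tm F Y y (Ring.inverse (Tm F Y y) z) = z := by
  have h := Ring.mul_inverse_cancel _ (hunit hnd hy)
  calc Tm F Y y (Ring.inverse (Tm F Y y) z)
      = ((Tm F Y y) * Ring.inverse (Tm F Y y)) z := rfl
    _ = z := by rw [h]; rfl

theorem hkprop (hnd : ∀ x ∈ Y, ∀ u : Fin N → ℝ,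
      (∀ v : Fin N → ℝ, iteratedFDerivWithin ℝ 2 F Y x ![u, v] = 0) → u = 0)
    {y : Fin N → ℝ} (hy : y ∈ Y) (c d w : Fin N → ℝ) :
    iteratedFDerivWithin ℝ 2 F Y y ![kp F Y c d y, w] =
      -(1/2) * iteratedFDerivWithin ℝ 3 F Y y ![c, d, w] := by
  rw [hdot2, exp3_2 (iteratedFDerivWithin ℝ 3 F Y y) c d w, Finset.mul_sum]
  refine Finset.sum_congr rfl fun i _ => ?_
  have : Tm F Y y (kp F Y c d y) = (-(1:ℝ)/2) • sv F Y c d y := by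
    rw [kp, map_smul, Tinv_eval hnd hy]
  rw [this]
  simp only [Pi.smul_apply, smul_eq_mul, sv]
  ring

theorem base_sum (v : Fin N → ℝ) : ∑ i : Fin N, v i • (Pi.single i 1 : Fin N → ℝ) = v := by
  funext l
  simp [Finset.sum_apply, Pi.single_apply, smul_eq_mul, mul_ite]

theorem hB1 (hnd : ∀ x ∈ Y, ∀ u : Fin N → ℝ,
      (∀ v : Fin N → ℝ, iteratedFDerivWithin ℝ 2 F Y x ![u, v] = 0) → u = 0)
    (hPDE : ∀ x ∈ Y, ∀ Binv : ((Fin N → ℝ) → ℝ) → (Fin N → ℝ),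
      (∀ φ : (Fin N → ℝ) → ℝ, IsLinearMap ℝ φ →
        ∀ v : Fin N → ℝ, iteratedFDerivWithin ℝ 2 F Y x ![Binv φ, v] = φ v) →
      ∀ a b c d : Fin N → ℝ,
        iteratedFDerivWithin ℝ 4 F Y x ![a, b, c, d] =
          (1 / 2) * (iteratedFDerivWithin ℝ 3 F Y x
              ![a, b, Binv fun w => iteratedFDerivWithin ℝ 3 F Y x ![c, d, w]]
            + iteratedFDerivWithin ℝ 3 F Y x
              ![a, c, Binv fun w => iteratedFDerivWithin ℝ 3 F Y x ![b, d, w]]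
            + iteratedFDerivWithin ℝ 3 F Y x
              ![a, d, Binv fun w => iteratedFDerivWithin ℝ 3 F Y x ![b, c, w]]))
    {y : Fin N → ℝ} (hy : y ∈ Y) (a b c d : Fin N → ℝ) :
    iteratedFDerivWithin ℝ 4 F Y y ![a, b, c, d] =
      -(iteratedFDerivWithin ℝ 3 F Y y ![a, b, kp F Y c d y]
        + iteratedFDerivWithin ℝ 3 F Y y ![a, c, kp F Y b d y]
        + iteratedFDerivWithin ℝ 3 F Y y ![a, d, kp F Y b c y]) := by
  set Binv : ((Fin N → ℝ) → ℝ) → (Fin N → ℝ) :=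
    fun φ => Ring.inverse (Tm F Y y) (fun i => φ (Pi.single i 1)) with hBinvdef
  have hcond : ∀ φ : (Fin N → ℝ) → ℝ, IsLinearMap ℝ φ →
      ∀ v : Fin N → ℝ, iteratedFDerivWithin ℝ 2 F Y y ![Binv φ, v] = φ v := by
    intro φ hφ v
    rw [hdot2, hBinvdef]
    simp only
    rw [Tinv_eval hnd hy]
    have : ∀ i : Fin N, v i * φ (Pi.single i 1) = φ (v i • (Pi.single i 1 : Fin N → ℝ)) := by
      intro i; rw [hφ.map_smul]; simp
    rw [Finset.sum_congr rfl fun i _ => this i]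
    have hms := map_sum (IsLinearMap.mk' φ hφ) (fun i => v i • (Pi.single i 1 : Fin N → ℝ))
      Finset.univ
    simp only [IsLinearMap.mk'_apply] at hms
    rw [← hms, base_sum]
  have hkey : ∀ c' d' : Fin N → ℝ,
      Binv (fun w => iteratedFDerivWithin ℝ 3 F Y y ![c', d', w]) = (-2:ℝ) • kp F Y c' d' y := by
    intro c' d'
    rw [hBinvdef]
    simp only
    rw [show (fun i => iteratedFDerivWithin ℝ 3 F Y y ![c', d', Pi.single i 1]) =
      sv F Y c' d' y from rfl, kp, smul_smul]
    norm_num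
  have hP := hPDE y hy Binv hcond a b c d
  rw [hkey c d, hkey b d, hkey b c, lin3_2_smul, lin3_2_smul, lin3_2_smul] at hP
  rw [hP]; ring

theorem hdk (hY : IsOpen Y) (hF : ContDiffOn ℝ (⊤ : ℕ∞) F Y)
    (hnd : ∀ x ∈ Y, ∀ u : Fin N → ℝ,
      (∀ v : Fin N → ℝ, iteratedFDerivWithin ℝ 2 F Y x ![u, v] = 0) → u = 0)
    (hx : x ∈ Y) (c d : Fin N → ℝ) : DifferentiableAt ℝ (kp F Y c d) x := by
  have hit2 : DifferentiableAt ℝ (iteratedFDerivWithin ℝ 2 F Y) x :=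
    (((hF x hx).iteratedFDerivWithin_right hY.uniqueDiffOn (WithTop.coe_le_coe.mpr le_top) hx).differentiableWithinAt
      one_ne_zero).differentiableAt (hY.mem_nhds hx)
  have hTdiff : DifferentiableAt ℝ (Tm F Y) x := (Phi N).differentiableAt.comp x hit2
  have hs : DifferentiableAt ℝ (sv F Y c d) x := by
    rw [show sv F Y c d = fun y => (fun i =>
      iteratedFDerivWithin ℝ 3 F Y y ![c, d, Pi.single i 1]) from rfl]
    refine differentiableAt_pi.2 fun i => ?_
    obtain ⟨L, hL, _⟩ := key hY hF hx 3 ![c, d, Pi.single i 1]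
    exact hL.differentiableAt
  have hinv : DifferentiableAt ℝ (fun y => Ring.inverse (Tm F Y y)) x :=
    (differentiableAt_inverse (hunit hnd hx)).comp x hTdiff
  have := (hinv.clm_apply hs).const_smul (-(1:ℝ)/2)
  exact this

theorem hM11 (hY : IsOpen Y) (hF : ContDiffOn ℝ (⊤ : ℕ∞) F Y)
    (hnd : ∀ x ∈ Y, ∀ u : Fin N → ℝ,
      (∀ v : Fin N → ℝ, iteratedFDerivWithin ℝ 2 F Y x ![u, v] = 0) → u = 0)
    (hx : x ∈ Y) (c d w e : Fin N → ℝ) :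
    iteratedFDerivWithin ℝ 2 F Y x ![fderiv ℝ (kp F Y c d) x e, w] =
      -(1/2) * iteratedFDerivWithin ℝ 4 F Y x ![e, c, d, w]
        - iteratedFDerivWithin ℝ 3 F Y x ![e, kp F Y c d x, w] := by
  classical
  have hkd := (hdk hY hF hnd hx c d).hasFDerivAt
  set kd := fderiv ℝ (kp F Y c d) x with hkddef
  choose L2 hL2 hL2e using fun i : Fin N => key hY hF hx 2 ![Pi.single i 1, w]
  obtain ⟨L3, hL3, hL3e⟩ := key hY hF hx 3 ![c, d, w]
  have hki : ∀ i : Fin N, HasFDerivAt (fun y => kp F Y c d y i)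
      ((ContinuousLinearMap.proj i).comp kd) x :=
    fun i => by simpa [Function.comp_def] using
      (ContinuousLinearMap.proj (R := ℝ) (φ := fun _ : Fin N => ℝ) i).hasFDerivAt.comp x hkd
  have hsum : HasFDerivAt
      (fun y => ∑ i : Fin N,
        kp F Y c d y i * iteratedFDerivWithin ℝ 2 F Y y ![Pi.single i 1, w])
      (∑ i : Fin N, (kp F Y c d x i • L2 i
        + iteratedFDerivWithin ℝ 2 F Y x ![Pi.single i 1, w]
          • (ContinuousLinearMap.proj i).comp kd)) x :=
    HasFDerivAt.fun_sum (u := Finset.univ) fun i _ => (hki i).mul (hL2 i)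
  have hRHS : HasFDerivAt (fun y => -(1/2) * iteratedFDerivWithin ℝ 3 F Y y ![c, d, w])
      ((-(1/2) : ℝ) • L3) x := hL3.const_mul _
  have heq : (fun y => ∑ i : Fin N,
      kp F Y c d y i * iteratedFDerivWithin ℝ 2 F Y y ![Pi.single i 1, w])
      =ᶠ[nhds x] (fun y => -(1/2) * iteratedFDerivWithin ℝ 3 F Y y ![c, d, w]) := by
    filter_upwards [hY.mem_nhds hx] with y hy
    rw [← exp2_0 (iteratedFDerivWithin ℝ 2 F Y y) (kp F Y c d y) w]
    exact hkprop hnd hy c d w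
  have huniq := (hRHS.congr_of_eventuallyEq heq).unique hsum
  have hev := congrFun (congrArg DFunLike.coe huniq) e
  simp only [ContinuousLinearMap.coe_sum', Finset.sum_apply, ContinuousLinearMap.add_apply,
    ContinuousLinearMap.smul_apply, ContinuousLinearMap.comp_apply,
    ContinuousLinearMap.proj_apply, smul_eq_mul] at hev
  -- hev : -(1/2) * L3 e = ∑ i, (kp x i * L2 i e + itD2 ![δi,w] * kd e i)
  rw [Finset.sum_add_distrib] at hev
  have hA : ∑ i : Fin N, kp F Y c d x i * L2 i e
      = iteratedFDerivWithin ℝ 3 F Y x ![e, kp F Y c d x, w] := by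
    rw [exp3_1 (iteratedFDerivWithin ℝ 3 F Y x) e (kp F Y c d x) w]
    refine Finset.sum_congr rfl fun i _ => ?_
    rw [hL2e i e]
    rfl
  have hB : ∑ i : Fin N,
      iteratedFDerivWithin ℝ 2 F Y x ![Pi.single i 1, w] * kd e i
      = iteratedFDerivWithin ℝ 2 F Y x ![kd e, w] := by
    rw [exp2_0 (iteratedFDerivWithin ℝ 2 F Y x) (kd e) w]
    exact Finset.sum_congr rfl fun i _ => mul_comm _ _
  rw [hA, hB, hL3e e] at hev
  have : (![e, c, d, w] : Fin 4 → Fin N → ℝ) = Fin.cons e ![c, d, w] := rfl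
  rw [this]
  linarith [hev]

theorem hM13 (hY : IsOpen Y) (hF : ContDiffOn ℝ (⊤ : ℕ∞) F Y)
    (hnd : ∀ x ∈ Y, ∀ u : Fin N → ℝ,
      (∀ v : Fin N → ℝ, iteratedFDerivWithin ℝ 2 F Y x ![u, v] = 0) → u = 0)
    (hB1' : ∀ y ∈ Y, ∀ a b c d : Fin N → ℝ,
      iteratedFDerivWithin ℝ 4 F Y y ![a, b, c, d] =
      -(iteratedFDerivWithin ℝ 3 F Y y ![a, b, kp F Y c d y]
        + iteratedFDerivWithin ℝ 3 F Y y ![a, c, kp F Y b d y]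
        + iteratedFDerivWithin ℝ 3 F Y y ![a, d, kp F Y b c y]))
    (hx : x ∈ Y) (u a e : Fin N → ℝ) :
    iteratedFDerivWithin ℝ 5 F Y x ![e, a, u, u, u] =
      -3 * (iteratedFDerivWithin ℝ 4 F Y x ![e, a, u, kp F Y u u x]
        + iteratedFDerivWithin ℝ 3 F Y x ![a, u, fderiv ℝ (kp F Y u u) x e]) := by
  classical
  have hkd := (hdk hY hF hnd hx u u).hasFDerivAt
  set kd := fderiv ℝ (kp F Y u u) x with hkddef
  choose L3 hL3 hL3e using fun i : Fin N => key hY hF hx 3 ![a, u, Pi.single i 1]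
  obtain ⟨L4, hL4, hL4e⟩ := key hY hF hx 4 ![a, u, u, u]
  have hki : ∀ i : Fin N, HasFDerivAt (fun y => kp F Y u u y i)
      ((ContinuousLinearMap.proj i).comp kd) x :=
    fun i => by simpa [Function.comp_def] using
      (ContinuousLinearMap.proj (R := ℝ) (φ := fun _ : Fin N => ℝ) i).hasFDerivAt.comp x hkd
  have hsum : HasFDerivAt
      (fun y => (-3 : ℝ) * ∑ i : Fin N,
        kp F Y u u y i * iteratedFDerivWithin ℝ 3 F Y y ![a, u, Pi.single i 1])
      ((-3 : ℝ) • ∑ i : Fin N, (kp F Y u u x i • L3 i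
        + iteratedFDerivWithin ℝ 3 F Y x ![a, u, Pi.single i 1]
          • (ContinuousLinearMap.proj i).comp kd)) x :=
    (HasFDerivAt.fun_sum (u := Finset.univ) fun i _ => (hki i).mul (hL3 i)).const_mul _
  have heq : (fun y => iteratedFDerivWithin ℝ 4 F Y y ![a, u, u, u])
      =ᶠ[nhds x] (fun y => (-3 : ℝ) * ∑ i : Fin N,
        kp F Y u u y i * iteratedFDerivWithin ℝ 3 F Y y ![a, u, Pi.single i 1]) := by
    filter_upwards [hY.mem_nhds hx] with y hy
    rw [← exp3_2 (iteratedFDerivWithin ℝ 3 F Y y) a u (kp F Y u u y), hB1' y hy a u u u]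
    ring
  have huniq := (hsum.congr_of_eventuallyEq heq).unique hL4
  have hev := congrFun (congrArg DFunLike.coe huniq.symm) e
  simp only [ContinuousLinearMap.coe_sum', Finset.sum_apply, ContinuousLinearMap.add_apply,
    ContinuousLinearMap.smul_apply, ContinuousLinearMap.comp_apply,
    ContinuousLinearMap.proj_apply, smul_eq_mul] at hev
  rw [Finset.sum_add_distrib] at hev
  have hA : ∑ i : Fin N, kp F Y u u x i * L3 i e
      = iteratedFDerivWithin ℝ 4 F Y x ![e, a, u, kp F Y u u x] := by
    have h4 : iteratedFDerivWithin ℝ 4 F Y x ![e, a, u, kp F Y u u x]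
        = ∑ i : Fin N, kp F Y u u x i
          * iteratedFDerivWithin ℝ 4 F Y x ![e, a, u, Pi.single i 1] :=
      exp4_3 (iteratedFDerivWithin ℝ 4 F Y x) e a u (kp F Y u u x)
    rw [h4]
    refine Finset.sum_congr rfl fun i _ => ?_
    rw [hL3e i e]
    rfl
  have hB : ∑ i : Fin N,
      iteratedFDerivWithin ℝ 3 F Y x ![a, u, Pi.single i 1] * kd e i
      = iteratedFDerivWithin ℝ 3 F Y x ![a, u, kd e] := by
    rw [exp3_2 (iteratedFDerivWithin ℝ 3 F Y x) a u (kd e)]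
    exact Finset.sum_congr rfl fun i _ => mul_comm _ _
  rw [hA, hB] at hev
  have h5 : iteratedFDerivWithin ℝ 5 F Y x ![e, a, u, u, u] = L4 e := by
    rw [hL4e e]; rfl
  rw [h5]
  linarith [hev]

end Stmt0

/-- For a smooth function `F` on an open set `Y ⊆ ℝ^N` with everywhere
nondegenerate Hessian satisfying the parallel cubic form PDE, the product `K_x` defined by
`D²F(x)[K_x(u,v),w] = -½ D³F(x)[u,v,w]` satisfies the Jordan identity at every `x ∈ Y`. -/
theorem stmt_0 {N : ℕ} (Y : Set (Fin N → ℝ)) (hY : IsOpen Y)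
    (F : (Fin N → ℝ) → ℝ) (hF : ContDiffOn ℝ (⊤ : ℕ∞) F Y)
    -- the Hessian is nondegenerate at every point of `Y`
    (hnd : ∀ x ∈ Y, ∀ u : Fin N → ℝ,
      (∀ v : Fin N → ℝ, iteratedFDerivWithin ℝ 2 F Y x ![u, v] = 0) → u = 0)
    -- the parallel cubic form PDE, expressed via any right inverse `Binv` of the Hessian
    -- (`B_x(φ, ψ) = φ(h_x⁻¹ ψ) = D³F(x)[a,b, Binv ψ]` for `φ = D³F(x)[a,b,·]`)
    (hPDE : ∀ x ∈ Y, ∀ Binv : ((Fin N → ℝ) → ℝ) → (Fin N → ℝ),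
      (∀ φ : (Fin N → ℝ) → ℝ, IsLinearMap ℝ φ →
        ∀ v : Fin N → ℝ, iteratedFDerivWithin ℝ 2 F Y x ![Binv φ, v] = φ v) →
      ∀ a b c d : Fin N → ℝ,
        iteratedFDerivWithin ℝ 4 F Y x ![a, b, c, d] =
          (1 / 2) * (iteratedFDerivWithin ℝ 3 F Y x
              ![a, b, Binv fun w => iteratedFDerivWithin ℝ 3 F Y x ![c, d, w]]
            + iteratedFDerivWithin ℝ 3 F Y x
              ![a, c, Binv fun w => iteratedFDerivWithin ℝ 3 F Y x ![b, d, w]]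
            + iteratedFDerivWithin ℝ 3 F Y x
              ![a, d, Binv fun w => iteratedFDerivWithin ℝ 3 F Y x ![b, c, w]])) :
    ∀ x ∈ Y, ∀ K : (Fin N → ℝ) → (Fin N → ℝ) → (Fin N → ℝ),
      (∀ u v w : Fin N → ℝ, iteratedFDerivWithin ℝ 2 F Y x ![K u v, w] =
        -(1 / 2) * iteratedFDerivWithin ℝ 3 F Y x ![u, v, w]) →
      ∀ u v : Fin N → ℝ, K (K (K u u) v) u = K (K u v) (K u u) := by
  intro x hx K hK u v
  classical
  have hB1' : ∀ y ∈ Y, ∀ a b c d : Fin N → ℝ,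
      iteratedFDerivWithin ℝ 4 F Y y ![a, b, c, d] =
      -(iteratedFDerivWithin ℝ 3 F Y y ![a, b, Stmt0.kp F Y c d y]
        + iteratedFDerivWithin ℝ 3 F Y y ![a, c, Stmt0.kp F Y b d y]
        + iteratedFDerivWithin ℝ 3 F Y y ![a, d, Stmt0.kp F Y b c y]) :=
    fun y hy => Stmt0.hB1 hnd hPDE hy
  -- cancellation using nondegeneracy
  have hcan : ∀ z1 z2 : Fin N → ℝ,
      (∀ w, iteratedFDerivWithin ℝ 2 F Y x ![z1, w] =
        iteratedFDerivWithin ℝ 2 F Y x ![z2, w]) → z1 = z2 := by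
    intro z1 z2 h
    refine sub_eq_zero.mp (hnd x hx _ fun w => ?_)
    rw [Stmt0.lin2_0_sub, h w, sub_self]
  -- K agrees with Stmt0.kp at x
  have hKk : ∀ a b : Fin N → ℝ, K a b = Stmt0.kp F Y a b x := fun a b =>
    hcan _ _ fun w => by rw [hK, Stmt0.hkprop hnd hx]
  -- symmetries at x
  have hsym2x : ∀ p q : Fin N → ℝ, iteratedFDerivWithin ℝ 2 F Y x ![p, q] =
      iteratedFDerivWithin ℝ 2 F Y x ![q, p] := fun p q => Stmt0.symm2 hY hF hx 0 p q ![]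
  have hC01 : ∀ p q r : Fin N → ℝ, iteratedFDerivWithin ℝ 3 F Y x ![p, q, r] =
      iteratedFDerivWithin ℝ 3 F Y x ![q, p, r] := fun p q r => Stmt0.symm2 hY hF hx 1 p q ![r]
  have hC12 : ∀ p q r : Fin N → ℝ, iteratedFDerivWithin ℝ 3 F Y x ![p, q, r] =
      iteratedFDerivWithin ℝ 3 F Y x ![p, r, q] := by
    intro p q r
    obtain ⟨L1, h1, h1e⟩ := Stmt0.key hY hF hx 2 ![q, r]
    obtain ⟨L2, h2, h2e⟩ := Stmt0.key hY hF hx 2 ![r, q]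
    have heq : (fun y => iteratedFDerivWithin ℝ 2 F Y y ![q, r])
        =ᶠ[nhds x] (fun y => iteratedFDerivWithin ℝ 2 F Y y ![r, q]) := by
      filter_upwards [hY.mem_nhds hx] with y hy using Stmt0.symm2 hY hF hy 0 q r ![]
    have huniq := (h2.congr_of_eventuallyEq heq).unique h1
    calc iteratedFDerivWithin ℝ 3 F Y x ![p, q, r] = L1 p := (h1e p).symm
      _ = L2 p := by rw [huniq]
      _ = iteratedFDerivWithin ℝ 3 F Y x ![p, r, q] := h2e p
  have hcyc : ∀ p q r : Fin N → ℝ, iteratedFDerivWithin ℝ 3 F Y x ![p, q, r] =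
      iteratedFDerivWithin ℝ 3 F Y x ![q, r, p] := by
    intro p q r
    rw [hC01 p q r, hC12 q p r]
  -- the basic exchange rules
  have hkx2 : ∀ p q z : Fin N → ℝ, iteratedFDerivWithin ℝ 3 F Y x ![p, q, z] =
      -2 * iteratedFDerivWithin ℝ 2 F Y x ![Stmt0.kp F Y p q x, z] := by
    intro p q z
    rw [Stmt0.hkprop hnd hx p q z]
    ring
  have hR : ∀ p q r s : Fin N → ℝ,
      iteratedFDerivWithin ℝ 3 F Y x ![p, q, Stmt0.kp F Y r s x] =
      iteratedFDerivWithin ℝ 3 F Y x ![r, s, Stmt0.kp F Y p q x] := by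
    intro p q r s
    rw [hkx2 p q (Stmt0.kp F Y r s x), hsym2x, ← hkx2 r s (Stmt0.kp F Y p q x)]
  have hksym : ∀ c d : Fin N → ℝ, Stmt0.kp F Y c d x = Stmt0.kp F Y d c x := fun c d =>
    hcan _ _ fun w => by rw [Stmt0.hkprop hnd hx, Stmt0.hkprop hnd hx, hC01]
  -- derivative of y ↦ Stmt0.kp u u y
  have hM12 : ∀ e : Fin N → ℝ, fderiv ℝ (Stmt0.kp F Y u u) x e =
      Stmt0.kp F Y e (Stmt0.kp F Y u u x) x - (2:ℝ) • Stmt0.kp F Y u (Stmt0.kp F Y e u x) x := by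
    intro e
    refine hcan _ _ fun w => ?_
    rw [Stmt0.hM11 hY hF hnd hx u u w e, hB1' x hx e u u w]
    rw [Stmt0.lin2_0_sub, Stmt0.lin2_0_smul]
    have h1 : iteratedFDerivWithin ℝ 3 F Y x ![e, w, Stmt0.kp F Y u u x] =
        iteratedFDerivWithin ℝ 3 F Y x ![e, Stmt0.kp F Y u u x, w] := hC12 e w _
    have h2 : iteratedFDerivWithin ℝ 3 F Y x ![e, u, Stmt0.kp F Y u w x] =
        -2 * iteratedFDerivWithin ℝ 2 F Y x ![Stmt0.kp F Y u (Stmt0.kp F Y e u x) x, w] := by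
      rw [hR e u u w, hC12 u w (Stmt0.kp F Y e u x), hkx2 u (Stmt0.kp F Y e u x) w]
    have h3 : iteratedFDerivWithin ℝ 3 F Y x ![e, Stmt0.kp F Y u u x, w] =
        -2 * iteratedFDerivWithin ℝ 2 F Y x ![Stmt0.kp F Y e (Stmt0.kp F Y u u x) x, w] :=
      hkx2 e (Stmt0.kp F Y u u x) w
    linarith [h1, h2, h3]
  -- symmetric 5th derivative identity
  have hEqa : ∀ e a : Fin N → ℝ,
      iteratedFDerivWithin ℝ 4 F Y x ![e, a, u, (Stmt0.kp F Y u u x)]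
        + iteratedFDerivWithin ℝ 3 F Y x ![a, u, fderiv ℝ (Stmt0.kp F Y u u) x e]
      = iteratedFDerivWithin ℝ 4 F Y x ![a, e, u, (Stmt0.kp F Y u u x)]
        + iteratedFDerivWithin ℝ 3 F Y x ![e, u, fderiv ℝ (Stmt0.kp F Y u u) x a] := by
    intro e a
    have h5 := Stmt0.symm2 hY hF hx 3 e a ![u, u, u]
    have hme := Stmt0.hM13 hY hF hnd hB1' hx u a e
    have hma := Stmt0.hM13 hY hF hnd hB1' hx u e a
    rw [show (Fin.cons e (Fin.cons a ![u, u, u]) : Fin 5 → Fin N → ℝ) = ![e, a, u, u, u]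
      from rfl, show (Fin.cons a (Fin.cons e ![u, u, u]) : Fin 5 → Fin N → ℝ) = ![a, e, u, u, u]
      from rfl, hme, hma] at h5
    linarith [h5]
  -- the reduced identity
  have hfinal : ∀ e a : Fin N → ℝ,
      iteratedFDerivWithin ℝ 3 F Y x ![e, (Stmt0.kp F Y u u x), Stmt0.kp F Y a u x] =
      iteratedFDerivWithin ℝ 3 F Y x ![a, (Stmt0.kp F Y u u x), Stmt0.kp F Y e u x] := by
    intro e a
    have h := hEqa e a
    rw [hM12 e, hM12 a, Stmt0.lin3_2_sub, Stmt0.lin3_2_smul, Stmt0.lin3_2_sub, Stmt0.lin3_2_smul,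
      hB1' x hx e a u (Stmt0.kp F Y u u x), hB1' x hx a e u (Stmt0.kp F Y u u x)] at h
    have h1 : iteratedFDerivWithin ℝ 3 F Y x ![e, a, Stmt0.kp F Y u (Stmt0.kp F Y u u x) x] =
        iteratedFDerivWithin ℝ 3 F Y x ![a, e, Stmt0.kp F Y u (Stmt0.kp F Y u u x) x] := hC01 e a _
    have h2 : iteratedFDerivWithin ℝ 3 F Y x ![a, u, Stmt0.kp F Y e (Stmt0.kp F Y u u x) x] =
        iteratedFDerivWithin ℝ 3 F Y x ![e, (Stmt0.kp F Y u u x), Stmt0.kp F Y a u x] := hR a u e (Stmt0.kp F Y u u x)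
    have h3 : iteratedFDerivWithin ℝ 3 F Y x ![e, u, Stmt0.kp F Y a (Stmt0.kp F Y u u x) x] =
        iteratedFDerivWithin ℝ 3 F Y x ![a, (Stmt0.kp F Y u u x), Stmt0.kp F Y e u x] := hR e u a (Stmt0.kp F Y u u x)
    have h4 : iteratedFDerivWithin ℝ 3 F Y x ![a, u, Stmt0.kp F Y u (Stmt0.kp F Y e u x) x] =
        iteratedFDerivWithin ℝ 3 F Y x ![e, u, Stmt0.kp F Y u (Stmt0.kp F Y a u x) x] := by
      rw [hR a u u (Stmt0.kp F Y e u x), hC12 u (Stmt0.kp F Y e u x) (Stmt0.kp F Y a u x),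
        hR u (Stmt0.kp F Y a u x) e u]
    linarith [h, h1, h2, h3, h4]
  -- reduce to Jordan identity for Stmt0.kp
  have hfin : Stmt0.kp F Y (Stmt0.kp F Y u u x) (Stmt0.kp F Y v u x) x = Stmt0.kp F Y u (Stmt0.kp F Y v (Stmt0.kp F Y u u x) x) x := by
    refine hcan _ _ fun e => ?_
    have h := hfinal e v
    rw [hcyc e (Stmt0.kp F Y u u x) (Stmt0.kp F Y v u x), hkx2 (Stmt0.kp F Y u u x) (Stmt0.kp F Y v u x) e] at h
    rw [hR v (Stmt0.kp F Y u u x) e u, hcyc e u (Stmt0.kp F Y v (Stmt0.kp F Y u u x) x), hkx2 u (Stmt0.kp F Y v (Stmt0.kp F Y u u x) x) e] at h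
    linarith [h]
  -- finish
  simp only [hKk]
  calc Stmt0.kp F Y (Stmt0.kp F Y (Stmt0.kp F Y u u x) v x) u x
      = Stmt0.kp F Y u (Stmt0.kp F Y (Stmt0.kp F Y u u x) v x) x := hksym _ u
    _ = Stmt0.kp F Y u (Stmt0.kp F Y v (Stmt0.kp F Y u u x) x) x := by rw [hksym (Stmt0.kp F Y u u x) v]
    _ = Stmt0.kp F Y (Stmt0.kp F Y u u x) (Stmt0.kp F Y v u x) x := hfin.symm
    _ = Stmt0.kp F Y (Stmt0.kp F Y u u x) (Stmt0.kp F Y u v x) x := by rw [hksym v u]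
    _ = Stmt0.kp F Y (Stmt0.kp F Y u v x) (Stmt0.kp F Y u u x) x := hksym _ _
end

section
/- Let Y ⊆ ℝ^N be an open set and F : Y → ℝ a smooth function satisfying the Euler relation DF(x)[x] = 1 for all x ∈ Y. Let x₀ ∈ Y be a point at which the Hessian D²F(x₀) is nondegenerate, and define the product K(u,v) ∈ ℝ^N as the unique vector with D²F(x₀)[K(u,v), w] = -½·D³F(x₀)[u,v,w] for all w. Then: (i) K(u, x₀) = u for all u ∈ ℝ^N, i.e. the position vector x₀ is a unit element for the product K; (ii) the symmetric bilinear form γ := D²F(x₀) satisfies γ(K(u,v), w) = γ(u, K(v,w)) for all u,v,w ∈ ℝ^N, i.e. γ is a trace form for the product K; (iii) γ(x₀, x₀) = -1. -/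
set_option maxHeartbeats 1000000 in
/-- For a smooth `F` on an open `Y ⊆ ℝ^N` with `DF(x)[x] = 1` on `Y` and
nondegenerate Hessian at `x₀ ∈ Y`, the product `K` with `D²F(x₀)[K(u,v),w] = -½ D³F(x₀)[u,v,w]`
has `x₀` as unit element, `γ = D²F(x₀)` is a trace form for `K`, and `γ(x₀,x₀) = -1`. -/
theorem stmt_1 {N : ℕ} (Y : Set (Fin N → ℝ)) (hY : IsOpen Y)
    (F : (Fin N → ℝ) → ℝ) (hF : ContDiffOn ℝ (⊤ : ℕ∞) F Y)
    -- the Euler relation `DF(x)[x] = 1` on `Y`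
    (hEuler : ∀ x ∈ Y, iteratedFDerivWithin ℝ 1 F Y x ![x] = 1)
    (x₀ : Fin N → ℝ) (hx₀ : x₀ ∈ Y)
    -- the Hessian at `x₀` is nondegenerate
    (hnd : ∀ u : Fin N → ℝ,
      (∀ v : Fin N → ℝ, iteratedFDerivWithin ℝ 2 F Y x₀ ![u, v] = 0) → u = 0) :
    ∀ K : (Fin N → ℝ) → (Fin N → ℝ) → (Fin N → ℝ),
      (∀ u v w : Fin N → ℝ, iteratedFDerivWithin ℝ 2 F Y x₀ ![K u v, w] =
        -(1 / 2) * iteratedFDerivWithin ℝ 3 F Y x₀ ![u, v, w]) →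
      -- (i) the position vector `x₀` is a unit element for `K`
      (∀ u : Fin N → ℝ, K u x₀ = u)
      -- (ii) `γ := D²F(x₀)` is a trace form for the product `K`
      ∧ (∀ u v w : Fin N → ℝ, iteratedFDerivWithin ℝ 2 F Y x₀ ![K u v, w]
          = iteratedFDerivWithin ℝ 2 F Y x₀ ![u, K v w])
      -- (iii) `γ(x₀, x₀) = -1`
      ∧ iteratedFDerivWithin ℝ 2 F Y x₀ ![x₀, x₀] = -1 := by
  intro K hK
  have hs : UniqueDiffOn ℝ Y := hY.uniqueDiffOn
  set g : (Fin N → ℝ) → ((Fin N → ℝ) →L[ℝ] ℝ) := fderivWithin ℝ F Y with hg_def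
  set g2 : (Fin N → ℝ) → ((Fin N → ℝ) →L[ℝ] ((Fin N → ℝ) →L[ℝ] ℝ)) := fderivWithin ℝ g Y with hg2_def
  have hF3 : ContDiffOn ℝ 3 F Y := hF.of_le (WithTop.coe_le_coe.mpr le_top)
  have hg : ContDiffOn ℝ 2 g Y := hF3.fderivWithin hs (by norm_num)
  have hg2 : ContDiffOn ℝ 1 g2 Y := hg.fderivWithin hs (by norm_num)
  have hdg : DifferentiableOn ℝ g Y := hg.differentiableOn (by norm_num)
  have hdg2 : DifferentiableOn ℝ g2 Y := hg2.differentiableOn (by norm_num)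
  -- Sym2
  have sym2 : ∀ x ∈ Y, ∀ a b : Fin N → ℝ, g2 x a b = g2 x b a := by
    intro x hx a b
    have := ((hF3 x hx).isSymmSndFDerivWithinAt (by norm_num) hs
      (by rw [hY.interior_eq]; exact subset_closure hx) hx).eq a b
    exact this
  -- two_apply
  have hiter2 : ∀ x ∈ Y, ∀ a b : Fin N → ℝ, iteratedFDerivWithin ℝ 2 F Y x ![a, b] = g2 x a b := by
    intro x hx a b
    simpa using iteratedFDerivWithin_two_apply F hs hx ![a, b]
  have hiter3 : ∀ a b c : Fin N → ℝ, iteratedFDerivWithin ℝ 3 F Y x₀ ![a, b, c]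
      = fderivWithin ℝ g2 Y x₀ a b c := by
    intro a b c
    rw [iteratedFDerivWithin_succ_apply_right hs hx₀,
      iteratedFDerivWithin_two_apply _ hs hx₀]
    simp [Fin.init, Fin.last, hg_def, hg2_def]
  -- Euler: g x x = 1 on Y
  have S1 : ∀ x ∈ Y, g x x = 1 := by
    intro x hx
    have h := hEuler x hx
    rwa [iteratedFDerivWithin_one_apply (hs x hx)] at h
  have S2 : ∀ x ∈ Y, ∀ v, g2 x v x + g x v = 0 := by
    intro x hx v
    have e1 : fderivWithin ℝ (fun y => g y y) Y x = fderivWithin ℝ (fun _ => (1:ℝ)) Y x :=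
      fderivWithin_congr (fun y hy => S1 y hy) (S1 x hx)
    have e2 : fderivWithin ℝ (fun y => g y y) Y x
        = (g x).comp (fderivWithin ℝ (fun y => y) Y x) + (fderivWithin ℝ g Y x).flip x :=
      fderivWithin_clm_apply (hs x hx) (hdg x hx) (differentiableWithinAt_id : DifferentiableWithinAt ℝ _root_.id Y x)
    rw [e1, fderivWithin_const_apply 1, fderivWithin_id' (hs x hx)] at e2
    have := congrArg (fun (T : (Fin N → ℝ) →L[ℝ] ℝ) => T v) e2.symm
    simpa [add_comm] using this
  set g3 : (Fin N → ℝ) →L[ℝ] ((Fin N → ℝ) →L[ℝ] ((Fin N → ℝ) →L[ℝ] ℝ)) := fderivWithin ℝ g2 Y x₀ with hg3_def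
  have S3 : ∀ v w, g3 w v x₀ + g2 x₀ v w + g2 x₀ w v = 0 := by
    intro v w
    have hc : DifferentiableWithinAt ℝ (fun y => g2 y v) Y x₀ :=
      (hdg2 x₀ hx₀).clm_apply (differentiableWithinAt_const v)
    have hA : DifferentiableWithinAt ℝ (fun y => g2 y v y) Y x₀ :=
      hc.clm_apply (differentiableWithinAt_id : DifferentiableWithinAt ℝ _root_.id Y x₀)
    have hB : DifferentiableWithinAt ℝ (fun y => g y v) Y x₀ :=
      (hdg x₀ hx₀).clm_apply (differentiableWithinAt_const v)
    have e0 : fderivWithin ℝ (fun y => g2 y v y + g y v) Y x₀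
        = fderivWithin ℝ (fun _ => (0:ℝ)) Y x₀ :=
      fderivWithin_congr (fun y hy => S2 y hy v) (S2 x₀ hx₀ v)
    have esum : fderivWithin ℝ (fun y => g2 y v y + g y v) Y x₀
        = fderivWithin ℝ (fun y => g2 y v y) Y x₀ + fderivWithin ℝ (fun y => g y v) Y x₀ :=
      fderivWithin_add (hs x₀ hx₀) hA hB
    have eA' : fderivWithin ℝ (fun y => g2 y v) Y x₀ = g3.flip v := by
      have h := fderivWithin_clm_apply (𝕜 := ℝ) (c := g2) (u := fun _ => v)
        (hs x₀ hx₀) (hdg2 x₀ hx₀) (differentiableWithinAt_const v)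
      rw [h, fderivWithin_const_apply v]
      simp [hg3_def]
    have eA : fderivWithin ℝ (fun y => g2 y v y) Y x₀
        = ((fun y => g2 y v) x₀).comp (fderivWithin ℝ (fun y => y) Y x₀)
          + (fderivWithin ℝ (fun y => g2 y v) Y x₀).flip x₀ :=
      fderivWithin_clm_apply (hs x₀ hx₀) hc
        (differentiableWithinAt_id : DifferentiableWithinAt ℝ _root_.id Y x₀)
    have eB : fderivWithin ℝ (fun y => g y v) Y x₀
        = (g x₀).comp (fderivWithin ℝ (fun _ => v) Y x₀) + (fderivWithin ℝ g Y x₀).flip v :=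
      fderivWithin_clm_apply (hs x₀ hx₀) (hdg x₀ hx₀) (differentiableWithinAt_const v)
    rw [esum, eA, eA', eB, fderivWithin_id' (hs x₀ hx₀),
      fderivWithin_const_apply v, fderivWithin_const_apply (0:ℝ)] at e0
    have := congrArg (fun T => T w) e0
    simp only [ContinuousLinearMap.add_apply, ContinuousLinearMap.comp_apply,
      ContinuousLinearMap.flip_apply, ContinuousLinearMap.coe_id', id_eq,
      ContinuousLinearMap.zero_apply, ContinuousLinearMap.comp_zero] at this
    linarith [sym2 x₀ hx₀ v w]
  have sym3b : ∀ a b, g3 a b = g3 b a := by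
    intro a b
    have symg : IsSymmSndFDerivWithinAt ℝ g Y x₀ :=
      (hg x₀ hx₀).isSymmSndFDerivWithinAt (by norm_num) hs
        (by rw [hY.interior_eq]; exact subset_closure hx₀) hx₀
    exact symg.eq a b
  have eval3 : ∀ b c a, fderivWithin ℝ (fun y => g2 y b c) Y x₀ a = g3 a b c := by
    intro b c a
    have hc : DifferentiableWithinAt ℝ (fun y => g2 y b) Y x₀ :=
      (hdg2 x₀ hx₀).clm_apply (differentiableWithinAt_const b)
    have h1 : fderivWithin ℝ (fun y => g2 y b) Y x₀ = g3.flip b := by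
      have h := fderivWithin_clm_apply (𝕜 := ℝ) (c := g2) (u := fun _ => b)
        (hs x₀ hx₀) (hdg2 x₀ hx₀) (differentiableWithinAt_const b)
      rw [h, fderivWithin_const_apply b]
      simp [hg3_def]
    have h2 := fderivWithin_clm_apply (𝕜 := ℝ) (c := fun y => g2 y b) (u := fun _ => c)
      (hs x₀ hx₀) hc (differentiableWithinAt_const c)
    rw [h2, fderivWithin_const_apply c, h1]
    simp
  have sym3a : ∀ a b c, g3 a b c = g3 a c b := by
    intro a b c
    rw [← eval3 b c a, ← eval3 c b a,
      fderivWithin_congr (fun y hy => sym2 y hy b c) (sym2 x₀ hx₀ b c)]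
  -- translate the hypothesis on `K`
  have hK' : ∀ u v w, g2 x₀ (K u v) w = -(1 / 2) * g3 u v w := by
    intro u v w
    have h := hK u v w
    rwa [hiter2 x₀ hx₀, hiter3] at h
  have cyc : ∀ u v w, g3 u v w = g3 v w u := by
    intro u v w
    have h1 := congrArg (fun T => T w) (sym3b u v)
    rw [h1, sym3a v u w]
  -- (i)
  have part1 : ∀ u : Fin N → ℝ, K u x₀ = u := by
    intro u
    have hu : ∀ v, g2 x₀ (K u x₀) v = g2 x₀ u v := by
      intro v
      rw [hK' u x₀ v, sym3a u x₀ v]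
      have h2 := S3 v u
      have h3 := sym2 x₀ hx₀ v u
      linarith
    have hz : ∀ v, iteratedFDerivWithin ℝ 2 F Y x₀ ![K u x₀ - u, v] = 0 := by
      intro v
      rw [hiter2 x₀ hx₀, map_sub, ContinuousLinearMap.sub_apply, hu v, sub_self]
    exact sub_eq_zero.1 (hnd _ hz)
  refine ⟨part1, ?_, ?_⟩
  · -- (ii)
    intro u v w
    rw [hK u v w, hiter2 x₀ hx₀ u (K v w), sym2 x₀ hx₀ u (K v w), hK' v w u, hiter3,
      cyc u v w]
  · -- (iii)
    rw [hiter2 x₀ hx₀]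
    have h1 := S2 x₀ hx₀ x₀
    have h2 := S1 x₀ hx₀
    linarith
end

section
/- Let m ≥ 1, let Q be an invertible symmetric real m×m matrix, let Y = {x ∈ ℝ^m : xᵀQx ≠ 0}, and let F : Y → ℝ be F(x) = ½·log|xᵀQx|. Then DF(x)[x] = 1 for all x ∈ Y, and the cubic expression vanishes identically: for all x ∈ Y and all u,v,w ∈ ℝ^m, D³F(x)[u,v,w] + 2·( D²F(x)[u,v]·DF(x)[w] + D²F(x)[u,w]·DF(x)[v] + D²F(x)[v,w]·DF(x)[u] ) + 4·DF(x)[u]·DF(x)[v]·DF(x)[w] = 0. (This is the analytic characterization of the level sets {x : |xᵀQx| = const} being quadrics, i.e. centro-affine hypersurfaces with vanishing cubic form.) -/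
/-!
With `q y = B y y` for the symmetric form `B x y = xᵀQy` we have `F = ½ log |q|`, so
`DF(x)[w] = B x w / q x` and `D²F(x)[v, w] = B v w / q x - 2 DF(x)[v] DF(x)[w]`; differentiating
once more, the cubic expression cancels identically. Conceptually, `e^{2F} = |q|` is locally quadratic,
and its third derivative is `2 e^{2F}` times the cubic expression.

Each iterated derivative within the open set `{q ≠ 0}` is reduced to the first derivative of an
explicit scalar function by evaluating at a fixed last vector
(`iteratedFDerivWithin_clm_apply_const_apply`), so no map into a space of multilinear maps is ever
differentiated explicitly.
-/

open scoped ContDiff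

section

variable {𝕜 E F : Type*} [NontriviallyNormedField 𝕜] [NormedAddCommGroup E] [NormedSpace 𝕜 E]
  [NormedAddCommGroup F] [NormedSpace 𝕜 F]

theorem HasFDerivAt.div {c d : E → 𝕜} {c' d' : E →L[𝕜] 𝕜} {x : E} (hc : HasFDerivAt c c' x)
    (hd : HasFDerivAt d d' x) (hx : d x ≠ 0) :
    HasFDerivAt (fun y => c y / d y) ((d x)⁻¹ • c' - (c x / d x ^ 2) • d') x := by
  simp only [div_eq_mul_inv]
  refine (hc.mul ((hasDerivAt_inv hx).comp_hasFDerivAt x hd)).congr_fderiv ?_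
  ext u
  simp
  field_simp
  ring

theorem iteratedFDerivWithin_one_apply_of_isOpen {U : Set E} (hU : IsOpen U) {f : E → F} {x : E}
    (hx : x ∈ U) (a : E) : iteratedFDerivWithin 𝕜 1 f U x ![a] = fderiv 𝕜 f x a := by
  rw [iteratedFDerivWithin_one_apply (hU.uniqueDiffWithinAt hx), fderivWithin_of_isOpen hU hx]
  rfl

theorem iteratedFDerivWithin_succ_apply_snoc_of_fderiv {U : Set E} (hU : IsOpen U) {f g : E → F}
    {k : ℕ} (hf : ContDiffOn 𝕜 (k + 1) f U) {w : E} (hg : ∀ y ∈ U, fderiv 𝕜 f y w = g y)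
    {x : E} (hx : x ∈ U) (m : Fin k → E) :
    iteratedFDerivWithin 𝕜 (k + 1) f U x (Fin.snoc m w) = iteratedFDerivWithin 𝕜 k g U x m := by
  have hfg : Set.EqOn (fun y => fderivWithin 𝕜 f U y w) g U := fun y hy => by
    simp only [fderivWithin_of_isOpen hU hy, hg y hy]
  rw [iteratedFDerivWithin_succ_apply_right hU.uniqueDiffOn hx, Fin.init_snoc, Fin.snoc_last,
    ← iteratedFDerivWithin_clm_apply_const_apply hU.uniqueDiffOn
      (hf.fderivWithin hU.uniqueDiffOn le_rfl) le_rfl hx,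
    iteratedFDerivWithin_congr hfg hx]

end

namespace ContinuousLinearMap

variable {E : Type*} [NormedAddCommGroup E] [NormedSpace ℝ E] (B : E →L[ℝ] E →L[ℝ] ℝ)

theorem isOpen_setOf_apply_self_ne_zero : IsOpen {x | B x x ≠ 0} :=
  isOpen_ne_fun (by fun_prop) continuous_const

theorem contDiffOn_half_log_abs_apply_self :
    ContDiffOn ℝ ω (fun y => 1 / 2 * Real.log |B y y|) {x | B x x ≠ 0} := by
  simp only [Real.log_abs]
  fun_prop (disch := exact fun x hx => hx)

theorem hasFDerivAt_apply_self (hB : ∀ x y, B x y = B y x) (x : E) :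
    HasFDerivAt (fun y => B y y) (2 • B x) x := by
  refine (B.hasFDerivAt_of_bilinear (hasFDerivAt_id x) (hasFDerivAt_id x)).congr_fderiv ?_
  ext u
  simp [two_smul, hB u x]

theorem hasFDerivAt_apply_const (x w : E) : HasFDerivAt (fun y => B y w) (B.flip w) x :=
  (B.flip w).hasFDerivAt

theorem fderiv_half_log_abs_apply_self (hB : ∀ x y, B x y = B y x) {x : E} (hx : B x x ≠ 0)
    (w : E) : fderiv ℝ (fun y => 1 / 2 * Real.log |B y y|) x w = B x w / B x x := by
  simp only [Real.log_abs]
  rw [(((B.hasFDerivAt_apply_self hB x).log hx).const_mul (1 / 2 : ℝ)).fderiv]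
  simp
  field_simp

theorem fderiv_div_apply_self (hB : ∀ x y, B x y = B y x) {x : E} (hx : B x x ≠ 0) (v w : E) :
    fderiv ℝ (fun y => B y w / B y y) x v =
      B v w / B x x - 2 * (B x v / B x x) * (B x w / B x x) := by
  rw [((B.hasFDerivAt_apply_const x w).div (B.hasFDerivAt_apply_self hB x) hx).fderiv]
  simp
  field_simp

theorem fderiv_div_apply_self_sub_mul (hB : ∀ x y, B x y = B y x) {x : E} (hx : B x x ≠ 0)
    (u v w : E) :
    fderiv ℝ (fun y => B v w / B y y - 2 * (B y v / B y y) * (B y w / B y y)) x u =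
      -2 * (B x u * B v w + B u v * B x w + B x v * B u w) / B x x ^ 2
        + 8 * B x u * B x v * B x w / B x x ^ 3 := by
  have hq := B.hasFDerivAt_apply_self hB x
  have h := ((hasFDerivAt_const (B v w) x).div hq hx).fun_sub
    ((((B.hasFDerivAt_apply_const x v).div hq hx).const_mul 2).fun_mul
      ((B.hasFDerivAt_apply_const x w).div hq hx))
  rw [h.fderiv]
  simp
  field_simp
  ring

variable {B}

theorem iteratedFDerivWithin_one_half_log_abs_apply_self (hB : ∀ x y, B x y = B y x) {x : E}
    (hx : B x x ≠ 0) (a : E) :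
    iteratedFDerivWithin ℝ 1 (fun y => 1 / 2 * Real.log |B y y|) {x | B x x ≠ 0} x ![a] =
      B x a / B x x := by
  rw [iteratedFDerivWithin_one_apply_of_isOpen B.isOpen_setOf_apply_self_ne_zero hx,
    B.fderiv_half_log_abs_apply_self hB hx]

theorem iteratedFDerivWithin_two_half_log_abs_apply_self (hB : ∀ x y, B x y = B y x) {x : E}
    (hx : B x x ≠ 0) (a b : E) :
    iteratedFDerivWithin ℝ 2 (fun y => 1 / 2 * Real.log |B y y|) {x | B x x ≠ 0} x ![a, b] =
      B a b / B x x - 2 * (B x a / B x x) * (B x b / B x x) := by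
  have hU := B.isOpen_setOf_apply_self_ne_zero
  rw [← show Fin.snoc ![a] b = ![a, b] by simp,
    iteratedFDerivWithin_succ_apply_snoc_of_fderiv hU
      (B.contDiffOn_half_log_abs_apply_self.of_le le_top)
      (fun y hy => B.fderiv_half_log_abs_apply_self hB hy b) hx,
    iteratedFDerivWithin_one_apply_of_isOpen hU hx, B.fderiv_div_apply_self hB hx]

theorem iteratedFDerivWithin_three_half_log_abs_apply_self (hB : ∀ x y, B x y = B y x) {x : E}
    (hx : B x x ≠ 0) (u v w : E) :
    iteratedFDerivWithin ℝ 3 (fun y => 1 / 2 * Real.log |B y y|) {x | B x x ≠ 0} x ![u, v, w] =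
      -2 * (B x u * B v w + B u v * B x w + B x v * B u w) / B x x ^ 2
        + 8 * B x u * B x v * B x w / B x x ^ 3 := by
  have hDF : ContDiffOn ℝ ω (fun y => B y w / B y y) {x | B x x ≠ 0} := by
    fun_prop (disch := exact fun x hx => hx)
  have hU := B.isOpen_setOf_apply_self_ne_zero
  rw [← show Fin.snoc ![u, v] w = ![u, v, w] by simp,
    iteratedFDerivWithin_succ_apply_snoc_of_fderiv hU
      (B.contDiffOn_half_log_abs_apply_self.of_le le_top)
      (fun y hy => B.fderiv_half_log_abs_apply_self hB hy w) hx,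
    ← show Fin.snoc ![u] v = ![u, v] by simp,
    iteratedFDerivWithin_succ_apply_snoc_of_fderiv hU (hDF.of_le le_top)
      (fun y hy => B.fderiv_div_apply_self hB hy v w) hx,
    iteratedFDerivWithin_one_apply_of_isOpen hU hx, B.fderiv_div_apply_self_sub_mul hB hx]

end ContinuousLinearMap

open Matrix ContinuousLinearMap in
theorem stmt_7_general (m : ℕ) (Q : Matrix (Fin m) (Fin m) ℝ)
    (hQsymm : Q.IsSymm)
    (Y : Set (Fin m → ℝ)) (hYdef : Y = {x | x ⬝ᵥ Q.mulVec x ≠ 0})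
    (F : (Fin m → ℝ) → ℝ) (hFdef : ∀ x, F x = (1 / 2) * Real.log |x ⬝ᵥ Q.mulVec x|) :
    (∀ x ∈ Y, iteratedFDerivWithin ℝ 1 F Y x ![x] = 1)
    ∧ (∀ x ∈ Y, ∀ u v w : Fin m → ℝ,
        iteratedFDerivWithin ℝ 3 F Y x ![u, v, w]
          + 2 * (iteratedFDerivWithin ℝ 2 F Y x ![u, v] * iteratedFDerivWithin ℝ 1 F Y x ![w]
            + iteratedFDerivWithin ℝ 2 F Y x ![u, w] * iteratedFDerivWithin ℝ 1 F Y x ![v]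
            + iteratedFDerivWithin ℝ 2 F Y x ![v, w] * iteratedFDerivWithin ℝ 1 F Y x ![u])
          + 4 * (iteratedFDerivWithin ℝ 1 F Y x ![u] * iteratedFDerivWithin ℝ 1 F Y x ![v]
            * iteratedFDerivWithin ℝ 1 F Y x ![w]) = 0) := by
  set B := (toBilin' Q).toContinuousBilinearMap
  have hB : ∀ x y, B x y = B y x := (isSymm_toBilin'_iff_isSymm.2 hQsymm).eq
  have hY : Y = {x | B x x ≠ 0} := by simp [hYdef, B, toBilin'_apply']
  have hF : F = fun y => 1 / 2 * Real.log |B y y| := by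
    funext y
    simp [hFdef, B, toBilin'_apply']
  subst hY hF
  refine ⟨fun x hx => ?_, fun x hx u v w => ?_⟩
  · rw [iteratedFDerivWithin_one_half_log_abs_apply_self hB hx, div_self hx]
  · simp only [iteratedFDerivWithin_one_half_log_abs_apply_self hB hx,
      iteratedFDerivWithin_two_half_log_abs_apply_self hB hx,
      iteratedFDerivWithin_three_half_log_abs_apply_self hB hx]
    field_simp
    ring

/-- For `Q` an invertible symmetric real `m × m` matrix and
`F(x) = ½·log|xᵀQx|` on `Y = {x : xᵀQx ≠ 0}`, the Euler relation `DF(x)[x] = 1` holds and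
the centro-affine cubic form expression vanishes identically (the level sets are quadrics). -/
theorem stmt_7 (m : ℕ) (hm : 1 ≤ m) (Q : Matrix (Fin m) (Fin m) ℝ)
    (hQsymm : Q.IsSymm) (hQdet : Q.det ≠ 0)
    (Y : Set (Fin m → ℝ)) (hYdef : Y = {x | x ⬝ᵥ Q.mulVec x ≠ 0})
    (F : (Fin m → ℝ) → ℝ) (hFdef : ∀ x, F x = (1 / 2) * Real.log |x ⬝ᵥ Q.mulVec x|) :
    (∀ x ∈ Y, iteratedFDerivWithin ℝ 1 F Y x ![x] = 1)
    ∧ (∀ x ∈ Y, ∀ u v w : Fin m → ℝ,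
        iteratedFDerivWithin ℝ 3 F Y x ![u, v, w]
          + 2 * (iteratedFDerivWithin ℝ 2 F Y x ![u, v] * iteratedFDerivWithin ℝ 1 F Y x ![w]
            + iteratedFDerivWithin ℝ 2 F Y x ![u, w] * iteratedFDerivWithin ℝ 1 F Y x ![v]
            + iteratedFDerivWithin ℝ 2 F Y x ![v, w] * iteratedFDerivWithin ℝ 1 F Y x ![u])
          + 4 * (iteratedFDerivWithin ℝ 1 F Y x ![u] * iteratedFDerivWithin ℝ 1 F Y x ![v]
            * iteratedFDerivWithin ℝ 1 F Y x ![w]) = 0) :=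
  stmt_7_general m Q hQsymm Y hYdef F hFdef
end

section
/- Let m ≥ 1, let S_m(ℝ) = {X ∈ M_m(ℝ) : Xᵀ = X} be the real vector space of symmetric real m×m matrices (of dimension m(m+1)/2), and let A ∈ S_m(ℝ). Then the map B ↦ A·B·A maps S_m(ℝ) to itself, and its determinant as an ℝ-linear endomorphism of S_m(ℝ) equals (det A)^{m+1}. -/
open Matrix

/-- The subspace of symmetric `m × m` matrices over a commutative ring. -/
def symMatrices (m : ℕ) (R : Type*) [CommRing R] :
    Submodule R (Matrix (Fin m) (Fin m) R) where
  carrier := {X | Xᵀ = X}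
  add_mem' := by
    intro a b ha hb
    simp only [Set.mem_setOf_eq] at *
    rw [Matrix.transpose_add, ha, hb]
  zero_mem' := Matrix.transpose_zero
  smul_mem' := by
    intro c a ha
    simp only [Set.mem_setOf_eq] at *
    rw [Matrix.transpose_smul, ha]

/-!
Write `A = U D Uᵀ` with `U` orthogonal and `D` diagonal. The congruence `X ↦ M X Mᵀ` is
multiplicative in `M`, so its determinant on symmetric matrices is a multiplicative function of
`M`, just as `det M` is; both therefore take the same value at `A` as at `D`. For `D = diag d`
the congruence scales the coordinate `X i j` (`i ≤ j`) by `d i * d j`, and each `d i` occurs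
`(m - i) + (i + 1) = m + 1` times in the product of these factors.
-/

lemma Fin.prod_le_pairs_mul {M : Type*} [CommMonoid M] {m : ℕ} (d : Fin m → M) :
    ∏ p : {p : Fin m × Fin m // p.1 ≤ p.2}, d p.1.1 * d p.1.2 = (∏ i, d i) ^ (m + 1) := by
  rw [← Finset.prod_subtype {p : Fin m × Fin m | p.1 ≤ p.2} (by simp)
    (fun p : Fin m × Fin m => d p.1 * d p.2), Finset.prod_mul_distrib,
    Finset.prod_filter, Finset.prod_filter, Fintype.prod_prod_type, Fintype.prod_prod_type,
    Finset.prod_comm (f := fun i j => if i ≤ j then d j else 1)]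
  simp only [← Finset.prod_filter, Finset.filter_le_eq_Ici, Finset.filter_ge_eq_Iic,
    Finset.prod_const, Fin.card_Ici, Fin.card_Iic, ← Finset.prod_mul_distrib, ← pow_add,
    ← Finset.prod_pow]
  exact Finset.prod_congr rfl fun i _ => congrArg (d i ^ ·) (by omega)

lemma MonoidHom.map_mul_mul_of_mul_eq_one {N M : Type*} [Monoid N] [CommMonoid M]
    (φ : N →* M) {u v : N} (huv : u * v = 1) (x : N) : φ (u * x * v) = φ x := by
  rw [map_mul, map_mul, mul_right_comm, ← map_mul, huv, map_one, one_mul]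

namespace symMatrices

variable {m : ℕ} {R : Type*} [CommRing R]

lemma mem_iff {X : Matrix (Fin m) (Fin m) R} : X ∈ symMatrices m R ↔ Xᵀ = X := Iff.rfl

lemma mul_mul_transpose_mem (M : Matrix (Fin m) (Fin m) R) {X : Matrix (Fin m) (Fin m) R}
    (hX : X ∈ symMatrices m R) : M * X * Mᵀ ∈ symMatrices m R := by
  rw [mem_iff] at hX ⊢
  rw [transpose_mul, transpose_mul, transpose_transpose, hX, Matrix.mul_assoc]

variable (m R) in
def congruence : Matrix (Fin m) (Fin m) R →* Module.End R (symMatrices m R) where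
  toFun M :=
    { toFun X := ⟨M * X * Mᵀ, mul_mul_transpose_mem M X.2⟩
      map_add' X Y := by ext1; simp [Matrix.mul_add, Matrix.add_mul]
      map_smul' c X := by ext1; simp }
  map_one' := by ext X : 2; simp
  map_mul' M N := by ext X : 2; simp [Matrix.mul_assoc]

@[simp]
lemma coe_congruence_apply (M : Matrix (Fin m) (Fin m) R) (X : symMatrices m R) :
    (congruence m R M X : Matrix (Fin m) (Fin m) R) = M * X * Mᵀ := rfl

variable (m R) in
def upperCoords : symMatrices m R ≃ₗ[R] ({p : Fin m × Fin m // p.1 ≤ p.2} → R) where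
  toFun X p := (X : Matrix (Fin m) (Fin m) R) p.1.1 p.1.2
  map_add' X Y := by ext; simp
  map_smul' c X := by ext; simp
  invFun c := ⟨of fun i j => c ⟨(min i j, max i j), min_le_max⟩, by
    ext i j; simp [min_comm, max_comm]⟩
  left_inv X := by
    ext i j
    rcases le_total i j with hij | hji
    · simp [hij]
    · simpa [hji] using congrFun₂ (mem_iff.mp X.2) i j
  right_inv c := by ext ⟨⟨i, j⟩, hij⟩; simp [hij]

lemma upperCoords_congruence_diagonal (d : Fin m → R) (X : symMatrices m R)
    (p : {p : Fin m × Fin m // p.1 ≤ p.2}) :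
    upperCoords m R (congruence m R (diagonal d) X) p
      = d p.1.1 * d p.1.2 * upperCoords m R X p := by
  simp [upperCoords, mul_right_comm]

lemma det_congruence_diagonal (d : Fin m → R) :
    LinearMap.det (congruence m R (diagonal d)) = (diagonal d).det ^ (m + 1) := by
  let e := upperCoords m R
  have hconj : e.toLinearMap ∘ₗ congruence m R (diagonal d) ∘ₗ e.symm.toLinearMap
      = toLin' (diagonal fun p : {p : Fin m × Fin m // p.1 ≤ p.2} => d p.1.1 * d p.1.2) := by
    refine LinearMap.ext fun c => funext fun p => ?_
    simp [e, upperCoords_congruence_diagonal, mulVec_diagonal]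
  rw [← LinearMap.det_conj _ e, hconj, LinearMap.det_toLin', det_diagonal, det_diagonal,
    Fin.prod_le_pairs_mul]

lemma det_congruence_of_isSymm {A : Matrix (Fin m) (Fin m) ℝ} (hA : A.IsSymm) :
    LinearMap.det (congruence m ℝ A) = A.det ^ (m + 1) := by
  have hH : A.IsHermitian := by
    rwa [IsHermitian, conjTranspose_eq_transpose_of_trivial]
  set U := hH.eigenvectorUnitary
  set D : Matrix (Fin m) (Fin m) ℝ := diagonal hH.eigenvalues
  have hAUD : A = U * D * star (U : Matrix (Fin m) (Fin m) ℝ) := by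
    simpa [D] using hH.spectral_theorem
  have hUU : (U : Matrix (Fin m) (Fin m) ℝ) * star (U : Matrix (Fin m) (Fin m) ℝ) = 1 :=
    Unitary.coe_mul_star_self U
  have hdetA : A.det = D.det := by
    rw [hAUD]; exact detMonoidHom.map_mul_mul_of_mul_eq_one hUU D
  have hdetP : LinearMap.det (congruence m ℝ A) = LinearMap.det (congruence m ℝ D) := by
    rw [hAUD]; exact (LinearMap.det.comp (congruence m ℝ)).map_mul_mul_of_mul_eq_one hUU D
  rw [hdetP, hdetA, det_congruence_diagonal]

end symMatrices

open symMatrices in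
theorem stmt_10_general (m : ℕ) (A : Matrix (Fin m) (Fin m) ℝ) (hA : Aᵀ = A) :
    (∀ B : Matrix (Fin m) (Fin m) ℝ, Bᵀ = B → (A * B * A)ᵀ = A * B * A)
    ∧ ∀ P : symMatrices m ℝ →ₗ[ℝ] symMatrices m ℝ,
        (∀ X : symMatrices m ℝ, (P X : Matrix (Fin m) (Fin m) ℝ)
          = A * (X : Matrix (Fin m) (Fin m) ℝ) * A) →
        LinearMap.det P = A.det ^ (m + 1) := by
  refine ⟨fun B hB => ?_, fun P hP => ?_⟩
  · simpa only [hA, mem_iff] using mul_mul_transpose_mem A (mem_iff.mpr hB)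
  · have hPA : P = congruence m ℝ A :=
      LinearMap.ext fun X => Subtype.ext <| by rw [hP X, coe_congruence_apply, hA]
    rw [hPA, det_congruence_of_isSymm hA]

/-- For `A ∈ S_m(ℝ)`, the map `B ↦ A·B·A` maps `S_m(ℝ)` to itself, and its
determinant as an ℝ-linear endomorphism of `S_m(ℝ)` equals `(det A)^(m+1)`. -/
theorem stmt_10 (m : ℕ) (hm : 1 ≤ m) (A : Matrix (Fin m) (Fin m) ℝ) (hA : Aᵀ = A) :
    (∀ B : Matrix (Fin m) (Fin m) ℝ, Bᵀ = B → (A * B * A)ᵀ = A * B * A)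
    ∧ ∀ P : symMatrices m ℝ →ₗ[ℝ] symMatrices m ℝ,
        (∀ X : symMatrices m ℝ, (P X : Matrix (Fin m) (Fin m) ℝ)
          = A * (X : Matrix (Fin m) (Fin m) ℝ) * A) →
        LinearMap.det P = A.det ^ (m + 1) :=
  stmt_10_general m A hA
end

section
/- Let m ≥ 1, let H_m(ℂ) = {X ∈ M_m(ℂ) : Xᴴ = X} be the real vector space of Hermitian complex m×m matrices (of real dimension m²), and let A ∈ H_m(ℂ). Then the map B ↦ A·B·A maps H_m(ℂ) to itself, and its determinant as an ℝ-linear endomorphism of H_m(ℂ) equals (det A)^{2m} (note det A is real for Hermitian A). -/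
open Matrix

/-- The real subspace of Hermitian complex `m × m` matrices. -/
noncomputable def hermMatrices (m : ℕ) : Submodule ℝ (Matrix (Fin m) (Fin m) ℂ) where
  carrier := {X | Xᴴ = X}
  add_mem' := by
    intro a b ha hb
    simp only [Set.mem_setOf_eq] at *
    rw [Matrix.conjTranspose_add, ha, hb]
  zero_mem' := Matrix.conjTranspose_zero
  smul_mem' := by
    intro c a ha
    simp only [Set.mem_setOf_eq] at *
    rw [Matrix.conjTranspose_smul, star_trivial, ha]

/-! By the spectral theorem `A = U D Uᴴ` with `U` unitary and `D = diag(λ)` real. The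
congruences `X ↦ G X Gᴴ` of `H_m(ℂ)` compose like the matrices `G`, so the determinant of
`X ↦ A X A` equals that of `X ↦ D X D`. The latter multiplies the real and imaginary parts of
the entry `X i j` by `λ i λ j`, so its determinant is
`∏ i j, λ i λ j = (∏ i, λ i) ^ (2 m) = (det A) ^ (2 m)`. -/

theorem Fintype.prod_mul_prod_eq_pow {ι R : Type*} [Fintype ι] [CommMonoid R] (c : ι → R) :
    ∏ p : ι × ι, c p.1 * c p.2 = (∏ i, c i) ^ (2 * Fintype.card ι) := by
  rw [Fintype.prod_prod_type]
  simp only [Finset.prod_mul_distrib, Finset.prod_const, Finset.prod_pow, Finset.card_univ,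
    ← pow_add, two_mul]

namespace hermMatrices

variable {m : ℕ}

noncomputable def congrMap (G : Matrix (Fin m) (Fin m) ℂ) :
    hermMatrices m →ₗ[ℝ] hermMatrices m where
  toFun X := ⟨G * (X : Matrix (Fin m) (Fin m) ℂ) * Gᴴ, by
    change (G * (X : Matrix (Fin m) (Fin m) ℂ) * Gᴴ)ᴴ = _
    rw [conjTranspose_mul, conjTranspose_mul, conjTranspose_conjTranspose, X.prop, mul_assoc]⟩
  map_add' X Y := Subtype.ext <| by simp [mul_add, add_mul]
  map_smul' r X := Subtype.ext <| by simp

@[simp]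
theorem coe_congrMap (G : Matrix (Fin m) (Fin m) ℂ) (X : hermMatrices m) :
    (congrMap G X : Matrix (Fin m) (Fin m) ℂ) = G * X * Gᴴ := rfl

theorem congrMap_one : congrMap (1 : Matrix (Fin m) (Fin m) ℂ) = LinearMap.id :=
  LinearMap.ext fun X => Subtype.ext <| by simp

theorem congrMap_mul (G H : Matrix (Fin m) (Fin m) ℂ) :
    congrMap (G * H) = congrMap G ∘ₗ congrMap H :=
  LinearMap.ext fun X => Subtype.ext <| by simp [conjTranspose_mul, mul_assoc]

theorem det_congrMap_unitary_conj (U : unitary (Matrix (Fin m) (Fin m) ℂ))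
    (D : Matrix (Fin m) (Fin m) ℂ) :
    LinearMap.det (congrMap ((U : Matrix (Fin m) (Fin m) ℂ) * D * star (U : Matrix _ _ ℂ))) =
      LinearMap.det (congrMap D) := by
  rw [congrMap_mul, congrMap_mul, LinearMap.det_comp, LinearMap.det_comp, mul_comm,
    ← mul_assoc, ← LinearMap.det_comp, ← congrMap_mul, Unitary.star_mul_self_of_mem U.2,
    congrMap_one, LinearMap.det_id, one_mul]

theorem star_apply (X : hermMatrices m) (i j : Fin m) :
    star ((X : Matrix (Fin m) (Fin m) ℂ) j i) = (X : Matrix (Fin m) (Fin m) ℂ) i j := by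
  conv_rhs => rw [← X.prop]
  rfl

theorem im_apply_self (X : hermMatrices m) (i : Fin m) :
    ((X : Matrix (Fin m) (Fin m) ℂ) i i).im = 0 := by
  have h := congrArg Complex.im (star_apply X i i)
  simp only [Complex.star_def, Complex.conj_im] at h
  linarith

/-- The imaginary part of `X i j` for `i < j` is stored at the transposed position `(j, i)`. -/
noncomputable def coord : hermMatrices m ≃ₗ[ℝ] (Fin m × Fin m → ℝ) where
  toFun X p := if p.1 ≤ p.2 then ((X : Matrix (Fin m) (Fin m) ℂ) p.1 p.2).re
    else ((X : Matrix (Fin m) (Fin m) ℂ) p.2 p.1).im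
  map_add' X Y := by
    funext p
    by_cases h : p.1 ≤ p.2 <;> simp [h]
  map_smul' c X := by
    funext p
    by_cases h : p.1 ≤ p.2 <;> simp [h]
  invFun f := ⟨Matrix.of fun i j =>
      if i < j then ⟨f (i, j), f (j, i)⟩
      else if j < i then ⟨f (j, i), -f (i, j)⟩
      else f (i, i), by
    change _ᴴ = _
    ext i j
    rcases lt_trichotomy i j with h | rfl | h
    · simp [h, h.not_gt, Complex.ext_iff]
    · simp
    · simp [h, h.not_gt, Complex.ext_iff]⟩
  left_inv X := by
    apply Subtype.ext
    ext i j
    rcases lt_trichotomy i j with h | rfl | h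
    · simp [h, h.le, Complex.ext_iff, ← star_apply X i j]
    · simp [Complex.ext_iff, im_apply_self]
    · simp [h, h.not_ge, h.not_gt, Complex.ext_iff, ← star_apply X i j]
  right_inv f := by
    funext ⟨i, j⟩
    rcases lt_trichotomy i j with h | rfl | h
    · simp [h, h.le]
    · simp
    · simp [h, h.not_ge]

theorem coord_congrMap_diagonal (c : Fin m → ℝ) (X : hermMatrices m) (p : Fin m × Fin m) :
    coord (congrMap (diagonal fun i => (c i : ℂ)) X) p = c p.1 * c p.2 * coord X p := by
  simp only [coord, LinearEquiv.coe_mk, LinearMap.coe_mk, AddHom.coe_mk, coe_congrMap,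
    diagonal_conjTranspose, diagonal_mul, mul_diagonal]
  split_ifs <;>
    simp only [Pi.star_apply, RCLike.star_def, Complex.conj_ofReal, Complex.mul_re,
      Complex.mul_im, Complex.ofReal_re, Complex.ofReal_im, zero_mul, mul_zero, sub_zero,
      add_zero, zero_add] <;>
    ring

theorem det_congrMap_diagonal (c : Fin m → ℝ) :
    LinearMap.det (congrMap (diagonal fun i => (c i : ℂ))) =
      ∏ p : Fin m × Fin m, c p.1 * c p.2 := by
  have h : coord.toLinearMap ∘ₗ congrMap (diagonal fun i => (c i : ℂ)) ∘ₗ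
      coord.symm.toLinearMap =
        Matrix.toLin' (diagonal fun p : Fin m × Fin m => c p.1 * c p.2) := by
    ext f p
    simp [coord_congrMap_diagonal, mulVec_diagonal]
  rw [← LinearMap.det_conj _ coord, h, LinearMap.det_toLin', det_diagonal]

theorem det_congrMap_of_isHermitian {A : Matrix (Fin m) (Fin m) ℂ} (hA : A.IsHermitian) :
    ((LinearMap.det (congrMap A) : ℝ) : ℂ) = A.det ^ (2 * m) := by
  obtain ⟨U, hU⟩ : ∃ U : unitary (Matrix (Fin m) (Fin m) ℂ),
      A = (U : Matrix (Fin m) (Fin m) ℂ) * diagonal (fun i => (hA.eigenvalues i : ℂ)) *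
        star (U : Matrix _ _ ℂ) :=
    ⟨hA.eigenvectorUnitary, by simpa [Function.comp_def] using hA.spectral_theorem⟩
  conv_lhs => rw [hU, det_congrMap_unitary_conj, det_congrMap_diagonal]
  rw [hA.det_eq_prod_eigenvalues]
  push_cast
  simpa using Fintype.prod_mul_prod_eq_pow fun i => (hA.eigenvalues i : ℂ)

end hermMatrices

theorem stmt_11_general (m : ℕ) (A : Matrix (Fin m) (Fin m) ℂ) (hA : Aᴴ = A) :
    (∀ B : Matrix (Fin m) (Fin m) ℂ, Bᴴ = B → (A * B * A)ᴴ = A * B * A)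
    ∧ ∀ P : hermMatrices m →ₗ[ℝ] hermMatrices m,
        (∀ X : hermMatrices m, (P X : Matrix (Fin m) (Fin m) ℂ)
          = A * (X : Matrix (Fin m) (Fin m) ℂ) * A) →
        ((LinearMap.det P : ℝ) : ℂ) = A.det ^ (2 * m) := by
  refine ⟨fun B hB => by rw [conjTranspose_mul, conjTranspose_mul, hA, hB, mul_assoc], ?_⟩
  intro P hP
  have hP_eq : P = hermMatrices.congrMap A :=
    LinearMap.ext fun X => Subtype.ext <| by rw [hP, hermMatrices.coe_congrMap, hA]
  rw [hP_eq]
  exact hermMatrices.det_congrMap_of_isHermitian hA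

/-- For `A ∈ H_m(ℂ)` Hermitian, the map `B ↦ A·B·A` maps `H_m(ℂ)` to itself,
and its determinant as an ℝ-linear endomorphism of `H_m(ℂ)` equals `(det A)^(2m)`
(with `det A` real for Hermitian `A`). -/
theorem stmt_11 (m : ℕ) (hm : 1 ≤ m) (A : Matrix (Fin m) (Fin m) ℂ) (hA : Aᴴ = A) :
    (∀ B : Matrix (Fin m) (Fin m) ℂ, Bᴴ = B → (A * B * A)ᴴ = A * B * A)
    ∧ ∀ P : hermMatrices m →ₗ[ℝ] hermMatrices m,
        (∀ X : hermMatrices m, (P X : Matrix (Fin m) (Fin m) ℂ)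
          = A * (X : Matrix (Fin m) (Fin m) ℂ) * A) →
        ((LinearMap.det P : ℝ) : ℂ) = A.det ^ (2 * m) :=
  stmt_11_general m A hA
end

section
/- Let m ≥ 1, let A_{2m}(ℂ) = {S ∈ M_{2m}(ℂ) : Sᵀ = -S} be the complex vector space of skew-symmetric complex 2m×2m matrices (of complex dimension m(2m-1)), and let J = [[0, I_m],[-I_m, 0]] be the standard symplectic matrix. For S ∈ A_{2m}(ℂ), the map T ↦ S·J·T·J·S maps A_{2m}(ℂ) to itself, and its determinant as a ℂ-linear endomorphism of A_{2m}(ℂ) equals (det S)^{2m-1}. -/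
/-!
Since `Jᵀ = -J` and `Sᵀ = -S`, the map is the congruence `T ↦ A T Aᵀ` with `A = S J`.
Both `A ↦ det (T ↦ A T Aᵀ)` and `A ↦ (det A) ^ (n - 1)` are multiplicative, so it suffices
to compare them on diagonal matrices and on transvections. A diagonal matrix `diagonal d`
scales the coordinate `T i j` (`i < j`) of a skew matrix by `d i * d j`, and
`∏_{i<j} d i d j = (∏ d) ^ (n - 1)`. A transvection is a commutator, so every multiplicative
map to a commutative monoid sends it to `1`. Finally `det J = 1`.
-/

open Matrix

def skewMatrices (n : Type*) (R : Type*) [CommRing R] : Submodule R (Matrix n n R) where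
  carrier := {X | Xᵀ = -X}
  add_mem' := by
    intro a b ha hb
    simp only [Set.mem_setOf_eq] at *
    rw [Matrix.transpose_add, ha, hb, neg_add]
  zero_mem' := by simp
  smul_mem' := by
    intro c a ha
    simp only [Set.mem_setOf_eq] at *
    rw [Matrix.transpose_smul, ha, smul_neg]

section Congruence

variable {ι R : Type*} [Fintype ι] [DecidableEq ι] [CommRing R]

omit [Fintype ι] [DecidableEq ι] in
lemma mem_skewMatrices {X : Matrix ι ι R} : X ∈ skewMatrices ι R ↔ Xᵀ = -X := Iff.rfl

omit [DecidableEq ι] in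
lemma mul_mul_transpose_mem_skewMatrices (A : Matrix ι ι R) {T : Matrix ι ι R}
    (hT : T ∈ skewMatrices ι R) : A * T * Aᵀ ∈ skewMatrices ι R := by
  rw [mem_skewMatrices] at hT ⊢
  simp [transpose_mul, hT, Matrix.mul_assoc]

noncomputable def skewCongr : Matrix ι ι R →* Module.End R (skewMatrices ι R) where
  toFun A := (LinearMap.mulLeftRight R (A, Aᵀ)).restrict
    fun _ hT ↦ mul_mul_transpose_mem_skewMatrices A hT
  map_one' := by ext; simp [LinearMap.restrict_apply, LinearMap.mulLeftRight_apply]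
  map_mul' A B := by
    ext T : 2
    change A * B * T * (A * B)ᵀ = A * (B * T * Bᵀ) * Aᵀ
    simp [transpose_mul, Matrix.mul_assoc]

@[simp]
lemma coe_skewCongr_apply (A : Matrix ι ι R) (T : skewMatrices ι R) :
    (skewCongr A T : Matrix ι ι R) = A * T * Aᵀ := rfl

end Congruence

theorem MonoidHom.map_transvection_eq_one {ι K M : Type*} [Fintype ι] [DecidableEq ι] [Field K]
    [NeZero (2 : K)] [CommMonoid M] (f : Matrix ι ι K →* M) {i j : ι} (hij : i ≠ j) (c : K) :
    f (transvection i j c) = 1 := by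
  -- Conjugation by `D` doubles the parameter, so `transvection i j c` is the commutator of `D`
  -- and `transvection i j c`.
  set D := diagonal (Function.update 1 i (2 : K))
  set D' := diagonal (Function.update 1 i (2⁻¹ : K))
  have hD : D * D' = 1 := by
    rw [diagonal_mul_diagonal, ← diagonal_one]
    congr 1
    ext k
    by_cases hk : k = i <;> simp [hk, two_ne_zero]
  have hconj : D * transvection i j c * D' = transvection i j (2 * c) := by
    rw [transvection, transvection, Matrix.mul_add, Matrix.add_mul, Matrix.mul_one, hD]
    congr 1
    ext a b
    rw [mul_diagonal, diagonal_mul, single_apply, single_apply]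
    split_ifs with hab
    · obtain ⟨rfl, rfl⟩ := hab
      simp [hij.symm]
    · simp
  calc f (transvection i j c)
      = f (D * transvection i j c * D' * transvection i j (-c)) := by
        rw [hconj, transvection_mul_transvection_same i j hij, two_mul, add_neg_cancel_right]
    _ = f (D * D') * f (transvection i j c * transvection i j (-c)) := by
        simp only [map_mul]; ac_rfl
    _ = 1 := by
        rw [hD, transvection_mul_transvection_same i j hij, add_neg_cancel, transvection_zero,
          map_one, one_mul]

section StrictUpper

variable {ι K : Type*} [Fintype ι] [LinearOrder ι] [Field K] [NeZero (2 : K)]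

omit [Fintype ι] [LinearOrder ι] in
lemma diag_eq_zero_of_mem_skewMatrices {T : Matrix ι ι K} (hT : T ∈ skewMatrices ι K)
    (i : ι) : T i i = 0 := by
  have h : T i i = -T i i := congrFun (congrFun hT i) i
  rw [eq_neg_iff_add_eq_zero, ← two_mul, mul_eq_zero] at h
  exact h.resolve_left two_ne_zero

noncomputable def skewMatricesEquivStrictUpper :
    skewMatrices ι K ≃ₗ[K] ({p : ι × ι // p.1 < p.2} → K) where
  toFun T p := (T : Matrix ι ι K) p.1.1 p.1.2
  map_add' _ _ := rfl
  map_smul' _ _ := rfl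
  invFun f :=
    let U : Matrix ι ι K := of fun i j ↦ if h : i < j then f ⟨(i, j), h⟩ else 0
    ⟨U - Uᵀ, by rw [mem_skewMatrices, transpose_sub, transpose_transpose, neg_sub]⟩
  left_inv T := by
    have hT : (T : Matrix ι ι K)ᵀ = -T := T.2
    ext i j
    rcases lt_trichotomy i j with h | rfl | h
    · simp [h, h.not_gt]
    · simp [diag_eq_zero_of_mem_skewMatrices T.2]
    · simp [h, h.not_gt, ← neg_eq_iff_eq_neg.mpr (congrFun (congrFun hT i) j)]
  right_inv f := by
    ext p
    simp [p.2, p.2.not_gt]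

lemma prod_strictUpper_mul_eq_pow {M : Type*} [CommMonoid M] (d : ι → M) :
    ∏ p : {p : ι × ι // p.1 < p.2}, d p.1.1 * d p.1.2
      = (∏ i, d i) ^ (Fintype.card ι - 1) := by
  classical
  have h_swap : ∏ p ∈ Finset.univ.offDiag with ¬ p.1 < p.2, d p.1
      = ∏ p ∈ Finset.univ.offDiag with p.1 < p.2, d p.2 :=
    Finset.prod_nbij' Prod.swap Prod.swap
      (by simp only [Finset.mem_filter, Finset.mem_offDiag]; grind)
      (by simp only [Finset.mem_filter, Finset.mem_offDiag]; grind) (by simp) (by simp) (by simp)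
  have h_rows : ∏ p ∈ (Finset.univ : Finset ι).offDiag, d p.1
      = ∏ i, ∏ _j ∈ Finset.univ.erase i, d i :=
    Finset.prod_finset_product _ _ _ (by aesop)
  calc ∏ p : {p : ι × ι // p.1 < p.2}, d p.1.1 * d p.1.2
      = ∏ p ∈ Finset.univ.offDiag with p.1 < p.2, d p.1 * d p.2 := by
        refine (Finset.prod_subtype _ (fun p ↦ ?_) (fun p : ι × ι ↦ d p.1 * d p.2)).symm
        simp only [Finset.mem_filter, Finset.mem_offDiag, Finset.mem_univ, true_and]
        exact ⟨fun h ↦ h.2, fun h ↦ ⟨h.ne, h⟩⟩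
    _ = ∏ p ∈ (Finset.univ : Finset ι).offDiag, d p.1 := by
        rw [Finset.prod_mul_distrib, ← h_swap, Finset.prod_filter_mul_prod_filter_not]
    _ = (∏ i, d i) ^ (Fintype.card ι - 1) := by
        simp [h_rows, Finset.prod_pow, Finset.card_erase_of_mem]

end StrictUpper

section Determinant

variable {ι K : Type*} [Fintype ι] [DecidableEq ι] [Field K] [NeZero (2 : K)]

theorem det_skewCongr_diagonal (d : ι → K) :
    LinearMap.det (skewCongr (diagonal d)) = (∏ i, d i) ^ (Fintype.card ι - 1) := by
  let : LinearOrder ι := LinearOrder.lift' _ (Fintype.equivFin ι).injective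
  let e := skewMatricesEquivStrictUpper (ι := ι) (K := K)
  have h_conj : e.toLinearMap ∘ₗ skewCongr (diagonal d) ∘ₗ e.symm.toLinearMap
      = toLin' (diagonal fun p ↦ d p.1.1 * d p.1.2) := by
    refine LinearMap.ext fun g ↦ funext fun p ↦ ?_
    have h_entry : (e.symm g : Matrix ι ι K) p.1.1 p.1.2 = g p :=
      congrFun (e.apply_symm_apply g) p
    change (diagonal d * e.symm g * (diagonal d)ᵀ) p.1.1 p.1.2 = _
    rw [diagonal_transpose, mul_diagonal, diagonal_mul, h_entry, toLin'_apply, mulVec_diagonal]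
    ring
  rw [← LinearMap.det_conj _ e, h_conj, LinearMap.det_toLin', det_diagonal,
    prod_strictUpper_mul_eq_pow]

theorem det_skewCongr (A : Matrix ι ι K) :
    LinearMap.det (skewCongr A) = A.det ^ (Fintype.card ι - 1) := by
  refine diagonal_transvection_induction
    (fun A ↦ LinearMap.det (skewCongr A) = A.det ^ (Fintype.card ι - 1)) A ?_ ?_ ?_
  · intro d _
    rw [det_skewCongr_diagonal, det_diagonal]
  · rintro ⟨i, j, hij, c⟩
    rw [TransvectionStruct.toMatrix_mk, det_transvection_of_ne _ _ hij, one_pow,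
      ← MonoidHom.comp_apply]
    exact MonoidHom.map_transvection_eq_one _ hij c
  · intro A B hA hB
    rw [map_mul, map_mul, hA, hB, det_mul, mul_pow]

end Determinant

theorem det_fromBlocks_zero_one_neg_one_zero (l R : Type*) [Fintype l] [DecidableEq l]
    [CommRing R] : (fromBlocks 0 1 (-1) 0 : Matrix (l ⊕ l) (l ⊕ l) R).det = 1 := by
  have h_shears : (fromBlocks 0 1 (-1) 0 : Matrix (l ⊕ l) (l ⊕ l) R)
      = fromBlocks 1 1 0 1 * fromBlocks 1 0 (-1) 1 * fromBlocks 1 1 0 1 := by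
    simp [fromBlocks_multiply]
  rw [h_shears, det_mul, det_mul, det_fromBlocks_zero₂₁, det_fromBlocks_zero₁₂]
  simp

theorem stmt_12_general (m : ℕ)
    (S : Matrix (Fin m ⊕ Fin m) (Fin m ⊕ Fin m) ℂ) (hS : Sᵀ = -S)
    (J : Matrix (Fin m ⊕ Fin m) (Fin m ⊕ Fin m) ℂ)
    (hJ : J = Matrix.fromBlocks 0 1 (-1) 0) :
    (∀ T : Matrix (Fin m ⊕ Fin m) (Fin m ⊕ Fin m) ℂ, Tᵀ = -T →
      (S * J * T * J * S)ᵀ = -(S * J * T * J * S))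
    ∧ ∀ P : skewMatrices (Fin m ⊕ Fin m) ℂ →ₗ[ℂ] skewMatrices (Fin m ⊕ Fin m) ℂ,
        (∀ T : skewMatrices (Fin m ⊕ Fin m) ℂ,
          (P T : Matrix (Fin m ⊕ Fin m) (Fin m ⊕ Fin m) ℂ)
            = S * J * (T : Matrix (Fin m ⊕ Fin m) (Fin m ⊕ Fin m) ℂ) * J * S) →
        LinearMap.det P = S.det ^ (2 * m - 1) := by
  have hJ_transpose : Jᵀ = -J := by
    rw [hJ, fromBlocks_transpose]
    simp [fromBlocks_neg]
  have h_congr (T : Matrix (Fin m ⊕ Fin m) (Fin m ⊕ Fin m) ℂ) :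
      S * J * T * J * S = S * J * T * (S * J)ᵀ := by
    simp [transpose_mul, hS, hJ_transpose, Matrix.mul_assoc]
  refine ⟨fun T hT ↦ ?_, fun P hP ↦ ?_⟩
  · rw [h_congr]
    exact mul_mul_transpose_mem_skewMatrices (S * J) hT
  · have hP_eq : P = skewCongr (S * J) :=
      LinearMap.ext fun T ↦ Subtype.ext (by rw [hP, h_congr, coe_skewCongr_apply])
    rw [hP_eq, det_skewCongr, det_mul, hJ, det_fromBlocks_zero_one_neg_one_zero, mul_one,
      Fintype.card_sum, Fintype.card_fin, two_mul]

/-- For `S` skew-symmetric complex `2m × 2m` and `J` the standard symplectic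
matrix, the map `T ↦ S·J·T·J·S` maps `A_{2m}(ℂ)` to itself, and its determinant as a
ℂ-linear endomorphism of `A_{2m}(ℂ)` equals `(det S)^(2m-1)`. -/
theorem stmt_12 (m : ℕ) (hm : 1 ≤ m)
    (S : Matrix (Fin m ⊕ Fin m) (Fin m ⊕ Fin m) ℂ) (hS : Sᵀ = -S)
    (J : Matrix (Fin m ⊕ Fin m) (Fin m ⊕ Fin m) ℂ)
    (hJ : J = Matrix.fromBlocks 0 1 (-1) 0) :
    (∀ T : Matrix (Fin m ⊕ Fin m) (Fin m ⊕ Fin m) ℂ, Tᵀ = -T →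
      (S * J * T * J * S)ᵀ = -(S * J * T * J * S))
    ∧ ∀ P : skewMatrices (Fin m ⊕ Fin m) ℂ →ₗ[ℂ] skewMatrices (Fin m ⊕ Fin m) ℂ,
        (∀ T : skewMatrices (Fin m ⊕ Fin m) ℂ,
          (P T : Matrix (Fin m ⊕ Fin m) (Fin m ⊕ Fin m) ℂ)
            = S * J * (T : Matrix (Fin m ⊕ Fin m) (Fin m ⊕ Fin m) ℂ) * J * S) →
        LinearMap.det P = S.det ^ (2 * m - 1) :=
  stmt_12_general m S hS J hJ
end

section
/- Let m ≥ 1, let Q be an invertible symmetric real m×m matrix, and let e ∈ ℝ^m satisfy eᵀQe = 1. For x ∈ ℝ^m define the linear operator P_x : ℝ^m → ℝ^m by P_x = (xᵀQx)·I + 4(eᵀQx)·(x·eᵀQ) - 2·x·xᵀQ - 2(xᵀQx)·e·eᵀQ. Then det(P_x) = (xᵀQx)^m for every x ∈ ℝ^m. In particular, x is invertible in the quadratic factor Jordan algebra Jord_m(Q,e) if and only if xᵀQx ≠ 0. -/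
/-!
With `q = xᵀQx`, the operator `P_x` is `q • id` plus a rank-two operator:
`P_x v = q v + ⟨w₁, v⟩ x + ⟨w₂, v⟩ e` with `w₁ = 4(eᵀQx) Qe - 2 Qx` and `w₂ = -2q Qe`.
By the Weinstein–Aronszajn identity its determinant is `q ^ (m - 2)` times the determinant of
the `2 × 2` matrix `q + (⟨wᵢ, uⱼ⟩)` with `u = (x, e)`, and `eᵀQe = 1` together with the symmetry
of `Q` make the latter `q²`. In dimension one `eᵀQe = 1` forces `(eᵀQx)² = q`, so `P_x = q • id`.
-/

open Matrix

section RankTwo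

variable {R ι : Type*} [CommRing R] [Fintype ι] [DecidableEq ι]

theorem Matrix.det_smul_one_add_mul_of_card_le {m n : Type*} [Fintype m] [Fintype n]
    [DecidableEq m] [DecidableEq n] (U : Matrix m n R) (V : Matrix n m R)
    (h : Fintype.card n ≤ Fintype.card m) (c : R) :
    (c • 1 + U * V).det = c ^ (Fintype.card m - Fintype.card n) * (c • 1 + V * U).det := by
  have := congrArg (Polynomial.eval c) (charpoly_mul_comm_of_le (-U) V h)
  simpa [eval_charpoly, sub_eq_add_neg, smul_one_eq_diagonal] using this

theorem LinearMap.det_smul_id_add_rank_two (h2 : 2 ≤ Fintype.card ι)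
    {f : (ι → R) →ₗ[R] (ι → R)} (c : R) (u₁ u₂ w₁ w₂ : ι → R)
    (hf : ∀ v, f v = c • v + (w₁ ⬝ᵥ v) • u₁ + (w₂ ⬝ᵥ v) • u₂) :
    LinearMap.det f = c ^ (Fintype.card ι - 2) *
      ((c + w₁ ⬝ᵥ u₁) * (c + w₂ ⬝ᵥ u₂) - (w₁ ⬝ᵥ u₂) * (w₂ ⬝ᵥ u₁)) := by
  set U := (Matrix.of ![u₁, u₂])ᵀ
  set W := Matrix.of ![w₁, w₂]
  have hWU : W * U = !![w₁ ⬝ᵥ u₁, w₁ ⬝ᵥ u₂; w₂ ⬝ᵥ u₁, w₂ ⬝ᵥ u₂] := by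
    ext i j; fin_cases i <;> fin_cases j <;> rfl
  have hf' : f = toLin' (c • 1 + U * W) := by
    refine LinearMap.ext fun v => ?_
    rw [hf, toLin'_apply, add_mulVec, smul_mulVec, one_mulVec, ← mulVec_mulVec, add_assoc]
    congr 1
    ext i
    simp [U, W, mulVec, dotProduct, Fin.sum_univ_two, mul_comm]
  rw [hf', det_toLin', det_smul_one_add_mul_of_card_le U W (by simpa using h2), hWU,
    Fintype.card_fin, det_fin_two]
  simp

end RankTwo

section QuadraticFactor

variable {R ι : Type*} [CommRing R] [Fintype ι]

theorem Matrix.IsSymm.dotProduct_mulVec_comm {Q : Matrix ι ι R} (hQ : Q.IsSymm) (x y : ι → R) :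
    x ⬝ᵥ Q *ᵥ y = y ⬝ᵥ Q *ᵥ x := by
  rw [dotProduct_mulVec, ← mulVec_transpose, hQ.eq, dotProduct_comm]

def quadraticRep (Q : Matrix ι ι R) (e x v : ι → R) : ι → R :=
  (x ⬝ᵥ Q.mulVec x) • v + (4 * (e ⬝ᵥ Q.mulVec x) * (e ⬝ᵥ Q.mulVec v)) • x
    - (2 * (x ⬝ᵥ Q.mulVec v)) • x - (2 * (x ⬝ᵥ Q.mulVec x) * (e ⬝ᵥ Q.mulVec v)) • e

theorem quadraticRep_eq_smul_add_rank_two (Q : Matrix ι ι R) (e x v : ι → R) :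
    quadraticRep Q e x v = (x ⬝ᵥ Q *ᵥ x) • v
      + (((4 * (e ⬝ᵥ Q *ᵥ x)) • (e ᵥ* Q) - (2 : R) • (x ᵥ* Q)) ⬝ᵥ v) • x
      + (((-2 * (x ⬝ᵥ Q *ᵥ x)) • (e ᵥ* Q)) ⬝ᵥ v) • e := by
  simp only [quadraticRep, sub_dotProduct, smul_dotProduct, ← dotProduct_mulVec, smul_eq_mul]
  module

theorem quadraticRep_of_subsingleton [Subsingleton ι] (Q : Matrix ι ι R) {e : ι → R}
    (he : e ⬝ᵥ Q *ᵥ e = 1) (x v : ι → R) :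
    quadraticRep Q e x v = (x ⬝ᵥ Q *ᵥ x) • v := by
  ext i
  have hsum (f : ι → R) : ∑ j, f j = f i := Fintype.sum_subsingleton f i
  simp only [dotProduct, mulVec, hsum] at he ⊢
  simp only [quadraticRep, dotProduct, mulVec, hsum, Pi.add_apply, Pi.sub_apply, Pi.smul_apply,
    smul_eq_mul]
  linear_combination (2 * x i * x i * Q i i * v i) * he

theorem LinearMap.det_eq_pow_of_quadraticRep_of_two_le [DecidableEq ι] {Q : Matrix ι ι R}
    (hQ : Q.IsSymm) {e : ι → R} (he : e ⬝ᵥ Q *ᵥ e = 1) (x : ι → R) (h2 : 2 ≤ Fintype.card ι)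
    {P : (ι → R) →ₗ[R] (ι → R)} (hP : ∀ v, P v = quadraticRep Q e x v) :
    LinearMap.det P = (x ⬝ᵥ Q *ᵥ x) ^ Fintype.card ι := by
  rw [det_smul_id_add_rank_two h2 _ x e _ _
    fun v => (hP v).trans (quadraticRep_eq_smul_add_rank_two Q e x v)]
  simp only [sub_dotProduct, smul_dotProduct, ← dotProduct_mulVec, he,
    hQ.dotProduct_mulVec_comm x e, smul_eq_mul]
  rw [← pow_sub_mul_pow _ h2]
  ring

theorem LinearMap.det_eq_pow_of_quadraticRep [DecidableEq ι] {Q : Matrix ι ι R}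
    (hQ : Q.IsSymm) {e : ι → R} (he : e ⬝ᵥ Q *ᵥ e = 1) (x : ι → R)
    {P : (ι → R) →ₗ[R] (ι → R)} (hP : ∀ v, P v = quadraticRep Q e x v) :
    LinearMap.det P = (x ⬝ᵥ Q *ᵥ x) ^ Fintype.card ι := by
  rcases le_or_gt (Fintype.card ι) 1 with h1 | h2
  · have : Subsingleton ι := Fintype.card_le_one_iff_subsingleton.mp h1
    have hP' : P = toLin' ((x ⬝ᵥ Q *ᵥ x) • 1) := LinearMap.ext fun v => by
      rw [hP, quadraticRep_of_subsingleton Q he, toLin'_apply, smul_mulVec, one_mulVec]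
    rw [hP', det_toLin', Matrix.det_smul, det_one, mul_one]
  · exact det_eq_pow_of_quadraticRep_of_two_le hQ he x h2 hP

end QuadraticFactor

theorem stmt_13_general (m : ℕ) (hm : 1 ≤ m) (Q : Matrix (Fin m) (Fin m) ℝ)
    (hQsymm : Q.IsSymm)
    (e : Fin m → ℝ) (he : e ⬝ᵥ Q.mulVec e = 1)
    (x : Fin m → ℝ) (P : (Fin m → ℝ) →ₗ[ℝ] (Fin m → ℝ))
    (hP : ∀ v : Fin m → ℝ, P v = (x ⬝ᵥ Q.mulVec x) • v
        + (4 * (e ⬝ᵥ Q.mulVec x) * (e ⬝ᵥ Q.mulVec v)) • x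
        - (2 * (x ⬝ᵥ Q.mulVec v)) • x
        - (2 * (x ⬝ᵥ Q.mulVec x) * (e ⬝ᵥ Q.mulVec v)) • e) :
    LinearMap.det P = (x ⬝ᵥ Q.mulVec x) ^ m
    ∧ (LinearMap.det P ≠ 0 ↔ x ⬝ᵥ Q.mulVec x ≠ 0) := by
  have hdet : LinearMap.det P = (x ⬝ᵥ Q *ᵥ x) ^ m := by
    simpa using LinearMap.det_eq_pow_of_quadraticRep hQsymm he x hP
  exact ⟨hdet, by rw [hdet]; exact pow_ne_zero_iff (by omega)⟩

/-- In the quadratic factor Jordan algebra `Jord_m(Q,e)`, the quadratic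
representation `P_x = (xᵀQx)·I + 4(eᵀQx)·x·eᵀQ - 2·x·xᵀQ - 2(xᵀQx)·e·eᵀQ` has determinant
`(xᵀQx)^m`; in particular `x` is invertible (i.e. `det P_x ≠ 0`) iff `xᵀQx ≠ 0`. -/
theorem stmt_13 (m : ℕ) (hm : 1 ≤ m) (Q : Matrix (Fin m) (Fin m) ℝ)
    (hQsymm : Q.IsSymm) (hQdet : Q.det ≠ 0)
    (e : Fin m → ℝ) (he : e ⬝ᵥ Q.mulVec e = 1)
    (x : Fin m → ℝ) (P : (Fin m → ℝ) →ₗ[ℝ] (Fin m → ℝ))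
    (hP : ∀ v : Fin m → ℝ, P v = (x ⬝ᵥ Q.mulVec x) • v
        + (4 * (e ⬝ᵥ Q.mulVec x) * (e ⬝ᵥ Q.mulVec v)) • x
        - (2 * (x ⬝ᵥ Q.mulVec v)) • x
        - (2 * (x ⬝ᵥ Q.mulVec x) * (e ⬝ᵥ Q.mulVec v)) • e) :
    LinearMap.det P = (x ⬝ᵥ Q.mulVec x) ^ m
    ∧ (LinearMap.det P ≠ 0 ↔ x ⬝ᵥ Q.mulVec x ≠ 0) :=
  stmt_13_general m hm Q hQsymm e he x P hP
end

section
/- Let m ≥ 1 and let V = { [[Z, W],[-W̄, Z̄]] : Z, W ∈ M_m(ℂ) } ⊆ M_{2m}(ℂ) be the real subspace of complex 2m×2m matrices of quaternion type (of real dimension 4m²), where W̄ denotes entrywise complex conjugation. For S ∈ V, the map T ↦ S·T·S maps V to itself, and its determinant as an ℝ-linear endomorphism of V equals (det S)^{4m} (note det S is a real number for S ∈ V). -/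
open Matrix

/-- The real subspace of complex `2m × 2m` matrices of quaternion type
`[[Z, W], [-W̄, Z̄]]`. -/
noncomputable def quatMatrices (m : ℕ) :
    Submodule ℝ (Matrix (Fin m ⊕ Fin m) (Fin m ⊕ Fin m) ℂ) where
  carrier := {S | ∃ Z W : Matrix (Fin m) (Fin m) ℂ,
    S = Matrix.fromBlocks Z W (-(W.map (starRingEnd ℂ))) (Z.map (starRingEnd ℂ))}
  add_mem' := by
    rintro a b ⟨Z1, W1, rfl⟩ ⟨Z2, W2, rfl⟩
    refine ⟨Z1 + Z2, W1 + W2, ?_⟩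
    rw [Matrix.fromBlocks_add,
      Matrix.map_add (starRingEnd ℂ) (fun a b => by simp) Z1 Z2,
      Matrix.map_add (starRingEnd ℂ) (fun a b => by simp) W1 W2, neg_add]
  zero_mem' := by
    refine ⟨0, 0, ?_⟩
    ext i j
    cases i <;> cases j <;> simp
  smul_mem' := by
    rintro c a ⟨Z, W, rfl⟩
    refine ⟨c • Z, c • W, ?_⟩
    ext i j
    cases i <;> cases j <;>
      simp [Matrix.smul_apply, Matrix.map_apply, Matrix.neg_apply, Complex.real_smul,
        _root_.map_mul, Complex.conj_ofReal]

/-!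
Quaternion-type matrices are the fixed points of the antilinear involution `A ↦ J Ā J⁻¹` of
`M_{2m}(ℂ)`, so they form a real form of `M_{2m}(ℂ)`: any real basis of them is also a complex
basis of `M_{2m}(ℂ)`. The involution is multiplicative, so the quaternion-type matrices are closed
under products, and in such a basis the real map `T ↦ S T S` and the complex map `X ↦ S X S` have
the same matrix. The latter is `S ⊗ Sᵀ` in the standard basis, of determinant `(det S)^{4m}`.
-/

section RealForm

variable {E ι : Type*} [AddCommGroup E] [Module ℂ E] (τ : E →ₛₗ[starRingEnd ℂ] E)

theorem exists_eq_add_I_smul_of_involutive (hτ : ∀ x, τ (τ x) = x) (x : E) :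
    ∃ a c, τ a = a ∧ τ c = c ∧ x = a + Complex.I • c := by
  refine ⟨(2 : ℂ)⁻¹ • (x + τ x), (-(2 : ℂ)⁻¹ * Complex.I) • (x - τ x), ?_, ?_, ?_⟩
  · simp [LinearMap.map_smulₛₗ, hτ, add_comm, map_ofNat]
  · simp only [LinearMap.map_smulₛₗ, map_sub, hτ, map_mul, map_neg, map_inv₀, map_ofNat,
      Complex.conj_I, mul_neg, neg_mul, neg_neg]
    rw [neg_smul, ← smul_neg, neg_sub]
  · rw [smul_smul, show Complex.I * (-2⁻¹ * Complex.I) = 2⁻¹ by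
      linear_combination (-2⁻¹ : ℂ) * Complex.I_sq]
    module

variable [Module ℝ E] [IsScalarTower ℝ ℂ E]

theorem linearIndependent_complex_of_fixed {v : ι → E} (hτv : ∀ i, τ (v i) = v i)
    (hv : LinearIndependent ℝ v) : LinearIndependent ℂ v := by
  rw [linearIndependent_iff'] at hv ⊢
  intro s g hg i hi
  have hconj : ∑ i ∈ s, starRingEnd ℂ (g i) • v i = 0 := by
    simpa [map_sum, LinearMap.map_smulₛₗ, hτv] using congrArg τ hg
  -- the real and imaginary parts of `g` are combinations of `g` and `conj ∘ g`
  have real_comb : ∀ (a b : ℂ) (r : ℂ → ℝ), (∀ z, (r z : ℂ) = a * z + b * starRingEnd ℂ z) →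
      ∑ i ∈ s, r (g i) • v i = 0 := by
    intro a b r hr
    calc ∑ i ∈ s, r (g i) • v i
        = a • ∑ i ∈ s, g i • v i + b • ∑ i ∈ s, starRingEnd ℂ (g i) • v i := by
          simp only [Finset.smul_sum, ← Finset.sum_add_distrib, smul_smul, ← add_smul, ← hr,
            ← algebraMap_smul ℂ (r _), Complex.coe_algebraMap]
      _ = 0 := by rw [hg, hconj, smul_zero, smul_zero, add_zero]
  have hre := real_comb 2⁻¹ 2⁻¹ Complex.re fun z => by rw [Complex.re_eq_add_conj]; ring
  have him := real_comb (2 * Complex.I)⁻¹ (-(2 * Complex.I)⁻¹) Complex.im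
    fun z => by rw [Complex.im_eq_sub_conj]; ring
  exact Complex.ext (hv s _ hre i hi) (hv s _ him i hi)

noncomputable def basisOfRealForm {V : Submodule ℝ E} (hV : ∀ x, x ∈ V ↔ τ x = x)
    (hτ : ∀ x, τ (τ x) = x) (b : Module.Basis ι ℝ V) : Module.Basis ι ℂ E :=
  .mk (linearIndependent_complex_of_fixed τ (fun i => (hV _).1 (b i).2)
      (b.linearIndependent.map' V.subtype V.ker_subtype)) <| by
    have hV_le : ∀ y ∈ V, y ∈ Submodule.span ℂ (Set.range (V.subtype ∘ b)) := by
      intro y hy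
      apply Submodule.span_le_restrictScalars ℝ ℂ
      rw [Set.range_comp, ← Submodule.map_span, b.span_eq]
      exact ⟨⟨y, hy⟩, trivial, rfl⟩
    intro x _
    obtain ⟨a, c, ha, hc, rfl⟩ := exists_eq_add_I_smul_of_involutive τ hτ x
    exact add_mem (hV_le a ((hV a).2 ha)) (Submodule.smul_mem _ _ (hV_le c ((hV c).2 hc)))

theorem coe_basisOfRealForm {V : Submodule ℝ E} (hV : ∀ x, x ∈ V ↔ τ x = x)
    (hτ : ∀ x, τ (τ x) = x) (b : Module.Basis ι ℝ V) (i : ι) :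
    basisOfRealForm τ hV hτ b i = b i := by
  simp [basisOfRealForm]

end RealForm

section RestrictScalars

variable {K L E ι : Type*} [CommRing K] [CommRing L] [Algebra K L] [AddCommGroup E] [Module K E]
  [Module L E] [IsScalarTower K L E] [Fintype ι] {V : Submodule K E}

theorem Module.Basis.repr_coe_eq_algebraMap_repr (b : Module.Basis ι K V)
    (bE : Module.Basis ι L E) (hb : ∀ i, bE i = b i) (x : V) (i : ι) :
    bE.repr x i = algebraMap K L (b.repr x i) := by
  conv_lhs => rw [← b.sum_repr x]
  simp only [Submodule.coe_sum, Submodule.coe_smul, ← algebraMap_smul L (b.repr x _), ← hb,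
    bE.repr_sum_self]

theorem LinearMap.algebraMap_det_eq_det_of_basis_coe [DecidableEq ι] (b : Module.Basis ι K V)
    (bE : Module.Basis ι L E) (hb : ∀ i, bE i = b i) (f : E →ₗ[L] E) (g : V →ₗ[K] V)
    (hfg : ∀ x, (g x : E) = f x) :
    algebraMap K L (LinearMap.det g) = LinearMap.det f := by
  rw [← LinearMap.det_toMatrix b, ← LinearMap.det_toMatrix bE, RingHom.map_det]
  congr 1
  ext i j
  rw [RingHom.mapMatrix_apply, Matrix.map_apply, LinearMap.toMatrix_apply,
    LinearMap.toMatrix_apply, hb, ← hfg, b.repr_coe_eq_algebraMap_repr bE hb]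

end RestrictScalars

open Kronecker in
theorem LinearMap.det_mulRight_comp_mulLeft {R n : Type*} [CommRing R] [Fintype n]
    [DecidableEq n] (A B : Matrix n n R) :
    LinearMap.det ((LinearMap.mulRight R B).comp (LinearMap.mulLeft R A)) =
      A.det ^ Fintype.card n * B.det ^ Fintype.card n := by
  let e := Matrix.stdBasis R n n
  have h_toMatrix : LinearMap.toMatrix e e
      ((LinearMap.mulRight R B).comp (LinearMap.mulLeft R A)) = A ⊗ₖ Bᵀ := by
    ext ⟨i, j⟩ ⟨p, q⟩
    have h_repr (M : Matrix n n R) : e.repr M (i, j) = M i j := by simp [e, Matrix.stdBasis]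
    rw [LinearMap.toMatrix_apply, Matrix.stdBasis_eq_single, LinearMap.comp_apply,
      LinearMap.mulLeft_apply, LinearMap.mulRight_apply, h_repr]
    simp [Matrix.mul_apply, Matrix.single, ite_and]
  rw [← LinearMap.det_toMatrix e, h_toMatrix, Matrix.det_kronecker, Matrix.det_transpose]

@[simp]
lemma Matrix.map_conj_map_conj {m n : Type*} (A : Matrix m n ℂ) :
    (A.map (starRingEnd ℂ)).map (starRingEnd ℂ) = A := by
  ext; simp

section QuatConj

open Matrix

variable (l : Type*) [Fintype l] [DecidableEq l]

/-- `A ↦ J Ā J⁻¹`, written with `J⁻¹ = -J`. -/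
noncomputable def quatConj :
    Matrix (l ⊕ l) (l ⊕ l) ℂ →ₛₗ[starRingEnd ℂ] Matrix (l ⊕ l) (l ⊕ l) ℂ where
  toFun A := -(J l ℂ * A.map (starRingEnd ℂ) * J l ℂ)
  map_add' A B := by
    simp only [Matrix.map_add _ (map_add (starRingEnd ℂ)), Matrix.mul_add, Matrix.add_mul,
      neg_add]
  map_smul' c A := by
    simp only [Matrix.map_smulₛₗ _ (starRingEnd ℂ) c (map_mul (starRingEnd ℂ) c),
      Matrix.mul_smul, Matrix.smul_mul, smul_neg]

variable {l}

lemma quatConj_apply (A : Matrix (l ⊕ l) (l ⊕ l) ℂ) :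
    quatConj l A = -(J l ℂ * A.map (starRingEnd ℂ) * J l ℂ) := rfl

lemma quatConj_quatConj (A : Matrix (l ⊕ l) (l ⊕ l) ℂ) : quatConj l (quatConj l A) = A := by
  simp only [quatConj_apply, Matrix.map_neg _ (map_neg (starRingEnd ℂ)), Matrix.map_mul, map_J,
    Matrix.map_conj_map_conj, Matrix.mul_neg, Matrix.neg_mul, neg_neg]
  rw [← Matrix.mul_assoc, ← Matrix.mul_assoc, J_squared, Matrix.mul_assoc, J_squared]
  simp

lemma quatConj_mul (A B : Matrix (l ⊕ l) (l ⊕ l) ℂ) :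
    quatConj l (A * B) = quatConj l A * quatConj l B := by
  simp only [quatConj_apply, Matrix.map_mul, Matrix.mul_neg, Matrix.neg_mul, neg_neg,
    Matrix.mul_assoc]
  rw [← Matrix.mul_assoc (J l ℂ) (J l ℂ), J_squared]
  simp

lemma quatConj_fromBlocks (A B C D : Matrix l l ℂ) :
    quatConj l (fromBlocks A B C D) = fromBlocks (D.map (starRingEnd ℂ))
      (-C.map (starRingEnd ℂ)) (-B.map (starRingEnd ℂ)) (A.map (starRingEnd ℂ)) := by
  simp [quatConj_apply, Matrix.J, Matrix.fromBlocks_map, Matrix.fromBlocks_multiply,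
    Matrix.fromBlocks_neg]

end QuatConj

namespace quatMatrices

variable {m : ℕ}

theorem mem_iff_quatConj_eq {S : Matrix (Fin m ⊕ Fin m) (Fin m ⊕ Fin m) ℂ} :
    S ∈ quatMatrices m ↔ quatConj (Fin m) S = S := by
  constructor
  · rintro ⟨Z, W, rfl⟩
    simp only [quatConj_fromBlocks, Matrix.map_neg _ (map_neg (starRingEnd ℂ)),
      Matrix.map_conj_map_conj, neg_neg]
  · intro h
    rw [← fromBlocks_toBlocks S, quatConj_fromBlocks, fromBlocks_inj] at h
    obtain ⟨h₁₁, -, h₂₁, -⟩ := h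
    refine ⟨S.toBlocks₁₁, S.toBlocks₁₂, ?_⟩
    rw [h₂₁, ← h₁₁, Matrix.map_conj_map_conj, h₁₁, fromBlocks_toBlocks]

theorem mul_mem {S T : Matrix (Fin m ⊕ Fin m) (Fin m ⊕ Fin m) ℂ}
    (hS : S ∈ quatMatrices m) (hT : T ∈ quatMatrices m) : S * T ∈ quatMatrices m := by
  rw [mem_iff_quatConj_eq] at *
  rw [quatConj_mul, hS, hT]

end quatMatrices

theorem stmt_14_general (m : ℕ)
    (S : Matrix (Fin m ⊕ Fin m) (Fin m ⊕ Fin m) ℂ) (hS : S ∈ quatMatrices m) :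
    (∀ T ∈ quatMatrices m, S * T * S ∈ quatMatrices m)
    ∧ ∀ P : quatMatrices m →ₗ[ℝ] quatMatrices m,
        (∀ T : quatMatrices m, (P T : Matrix (Fin m ⊕ Fin m) (Fin m ⊕ Fin m) ℂ)
          = S * (T : Matrix (Fin m ⊕ Fin m) (Fin m ⊕ Fin m) ℂ) * S) →
        ((LinearMap.det P : ℝ) : ℂ) = S.det ^ (4 * m) := by
  refine ⟨fun T hT => quatMatrices.mul_mem (quatMatrices.mul_mem hS hT) hS, fun P hP => ?_⟩
  let b := Module.finBasis ℝ (quatMatrices m)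
  let bE := basisOfRealForm (quatConj (Fin m)) (fun _ => quatMatrices.mem_iff_quatConj_eq)
    quatConj_quatConj b
  calc ((LinearMap.det P : ℝ) : ℂ)
      = LinearMap.det ((LinearMap.mulRight ℂ S).comp (LinearMap.mulLeft ℂ S)) :=
        LinearMap.algebraMap_det_eq_det_of_basis_coe b bE (fun _ => coe_basisOfRealForm ..) _ P hP
    _ = S.det ^ (4 * m) := by
        rw [LinearMap.det_mulRight_comp_mulLeft, ← pow_add, Fintype.card_sum, Fintype.card_fin]
        ring_nf

/-- For `S` of quaternion type, the map `T ↦ S·T·S` maps the space of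
quaternion-type matrices to itself, and its determinant as an ℝ-linear endomorphism of
that space equals `(det S)^(4m)` (with `det S` real). -/
theorem stmt_14 (m : ℕ) (hm : 1 ≤ m)
    (S : Matrix (Fin m ⊕ Fin m) (Fin m ⊕ Fin m) ℂ) (hS : S ∈ quatMatrices m) :
    (∀ T ∈ quatMatrices m, S * T * S ∈ quatMatrices m)
    ∧ ∀ P : quatMatrices m →ₗ[ℝ] quatMatrices m,
        (∀ T : quatMatrices m, (P T : Matrix (Fin m ⊕ Fin m) (Fin m ⊕ Fin m) ℂ)
          = S * (T : Matrix (Fin m ⊕ Fin m) (Fin m ⊕ Fin m) ℂ) * S) →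
        ((LinearMap.det P : ℝ) : ℂ) = S.det ^ (4 * m) :=
  stmt_14_general m S hS
end

section
/- Let m ≥ 1 and let S ∈ M_{2m}(ℂ) be of quaternion type, i.e. S = [[Z, W],[-W̄, Z̄]] for some Z, W ∈ M_m(ℂ). Then det S is a real number, and det S ≥ 0. -/
/-!
The map `σ (v, w) = (-w̄, v̄)` is antilinear with `σ² = -1` and commutes with `S`. Hence `σ` maps
the generalized eigenspace of `S` for `μ` injectively into that for `μ̄`, so the roots of the
characteristic polynomial come in conjugate pairs with equal multiplicities. For real `μ`, `σ`
preserves the generalized eigenspace and, together with multiplication by `i`, makes it a module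
over the quaternions; its complex dimension is therefore even. So the multiset of eigenvalues has
the form `t + t̄`, and `det S = ∏ t · conj (∏ t) = |∏ t|² ≥ 0`.
-/

open Matrix Module ComplexConjugate Quaternion

theorem Multiset.exists_eq_add_map_of_count_eq {α : Type*} [DecidableEq α] {f : α → α}
    (hf : Function.Involutive f) (s : Multiset α) (hcount : ∀ a, s.count (f a) = s.count a)
    (heven : ∀ a, f a = a → Even (s.count a)) : ∃ t, s = t + t.map f := by
  induction s using Multiset.strongInductionOn with
  | ih s ih =>
  rcases s.empty_or_exists_mem with rfl | ⟨a, ha⟩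
  · exact ⟨0, rfl⟩
  set u : Multiset α := {a, f a}
  have hu_count : ∀ b, u.count (f b) = u.count b := by
    intro b
    simp only [u, Multiset.insert_eq_cons, Multiset.count_cons, Multiset.count_singleton,
      hf.injective.eq_iff, hf.eq_iff]
    omega
  have hu_even : ∀ b, f b = b → Even (u.count b) := by
    intro b hb
    simp only [u, Multiset.insert_eq_cons, Multiset.count_cons, Multiset.count_singleton]
    have hfa : f (f a) = a := hf a
    grind
  have hu : u ≤ s := by
    rw [Multiset.le_iff_count]
    intro b
    have hpos : 0 < s.count a := Multiset.count_pos.mpr ha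
    simp only [u, Multiset.insert_eq_cons, Multiset.count_cons, Multiset.count_singleton]
    grind
  obtain ⟨s', rfl⟩ := Multiset.le_iff_exists_add.mp hu
  have hu_pos : 0 < u := pos_iff_ne_zero.mpr (Multiset.cons_ne_zero)
  obtain ⟨t, rfl⟩ := ih s' (lt_add_of_pos_left s' hu_pos)
    (fun b => by simpa [hu_count] using hcount b)
    (fun b hb => by simpa [Nat.even_add, hu_even b hb] using heven b hb)
  refine ⟨a ::ₘ t, ?_⟩
  simp only [u, Multiset.map_cons, Multiset.insert_eq_cons, Multiset.singleton_add,
    Multiset.cons_add, Multiset.add_cons]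
  exact Multiset.cons_swap _ _ _

section Antilinear

variable {V W : Type*} [AddCommGroup V] [Module ℂ V] [AddCommGroup W] [Module ℂ W]

def LinearMap.toRealLinearMap (g : V →ₗ⋆[ℂ] W) : V →ₗ[ℝ] W where
  toFun := g
  map_add' := g.map_add
  map_smul' r v := by simp [← Complex.coe_smul]

lemma LinearMap.finrank_le_finrank_of_injective_antilinear [FiniteDimensional ℂ W]
    {g : V →ₗ⋆[ℂ] W} (hg : Function.Injective g) : finrank ℂ V ≤ finrank ℂ W := by
  have := LinearMap.finrank_le_finrank_of_injective (f := g.toRealLinearMap) hg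
  rw [finrank_real_of_complex, finrank_real_of_complex] at this
  omega

theorem even_finrank_of_antilinear_sq_eq_neg [FiniteDimensional ℂ V] (σ : V →ₗ⋆[ℂ] V)
    (hσ : ∀ v, σ (σ v) = -v) : Even (finrank ℂ V) := by
  let i : End ℝ V := (Complex.I • LinearMap.id : End ℂ V).restrictScalars ℝ
  let j : End ℝ V := σ.toRealLinearMap
  let basis : QuaternionAlgebra.Basis (End ℝ V) (-1 : ℝ) 0 (-1) :=
    { i, j, k := i * j
      i_mul_i := by ext v; simp [i, smul_smul]
      j_mul_j := by ext v; simp [j, LinearMap.toRealLinearMap, hσ]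
      i_mul_j := rfl
      j_mul_i := by ext v; simp [i, j, LinearMap.toRealLinearMap] }
  let φ : ℍ[ℝ] →ₐ[ℝ] End ℝ V := QuaternionAlgebra.lift basis
  let _ : Module ℍ[ℝ] V := Module.compHom V φ.toRingHom
  have : IsScalarTower ℝ ℍ[ℝ] V := ⟨fun r q v => by
    show φ (r • q) v = r • φ q v
    rw [map_smul, LinearMap.smul_apply]⟩
  have h := finrank_mul_finrank ℝ ℍ[ℝ] V
  rw [Quaternion.finrank_eq_four, finrank_real_of_complex] at h
  exact ⟨finrank ℍ[ℝ] V, by linarith⟩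

variable {f : End ℂ V} {σ : V →ₗ⋆[ℂ] V}

lemma map_pow_sub_smul_apply (hf : ∀ v, σ (f v) = f (σ v)) (μ : ℂ) (k : ℕ) (v : V) :
    σ (((f - μ • 1) ^ k) v) = ((f - conj μ • 1) ^ k) (σ v) := by
  induction k with
  | zero => rfl
  | succ k ih => simp [pow_succ', Module.End.mul_apply, ← ih, hf]

lemma mapsTo_maxGenEigenspace_conj (hf : ∀ v, σ (f v) = f (σ v)) (μ : ℂ) :
    ∀ v ∈ f.maxGenEigenspace μ, σ v ∈ f.maxGenEigenspace (conj μ) := by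
  simp only [Module.End.mem_maxGenEigenspace]
  rintro v ⟨k, hk⟩
  exact ⟨k, by rw [← map_pow_sub_smul_apply hf, hk, map_zero]⟩

variable [FiniteDimensional ℂ V]

lemma finrank_maxGenEigenspace_conj (hσ : ∀ v, σ (σ v) = -v) (hf : ∀ v, σ (f v) = f (σ v))
    (μ : ℂ) : finrank ℂ (f.maxGenEigenspace (conj μ)) = finrank ℂ (f.maxGenEigenspace μ) := by
  have hinj : Function.Injective σ := Function.LeftInverse.injective (g := fun v => -σ v)
    (fun v => by simp [hσ])
  have key : ∀ μ : ℂ, finrank ℂ (f.maxGenEigenspace μ) ≤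
      finrank ℂ (f.maxGenEigenspace (conj μ)) := fun μ =>
    LinearMap.finrank_le_finrank_of_injective_antilinear
      (g := σ.restrict (mapsTo_maxGenEigenspace_conj hf μ))
      (fun v w h => Subtype.ext (hinj (congrArg Subtype.val h)))
  refine le_antisymm ?_ (key μ)
  have h := key (conj μ)
  rwa [Complex.conj_conj] at h

lemma even_finrank_maxGenEigenspace_ofReal (hσ : ∀ v, σ (σ v) = -v)
    (hf : ∀ v, σ (f v) = f (σ v)) (μ : ℝ) : Even (finrank ℂ (f.maxGenEigenspace μ)) := by
  have hmaps : ∀ v ∈ f.maxGenEigenspace μ, σ v ∈ f.maxGenEigenspace μ := by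
    simpa using mapsTo_maxGenEigenspace_conj hf μ
  exact even_finrank_of_antilinear_sq_eq_neg (σ.restrict hmaps) (fun v => Subtype.ext (hσ v))

open scoped ComplexOrder in
theorem LinearMap.det_nonneg_of_commute_antilinear (hσ : ∀ v, σ (σ v) = -v)
    (hf : ∀ v, σ (f v) = f (σ v)) : 0 ≤ LinearMap.det f := by
  classical
  have hcount : ∀ μ, f.charpoly.roots.count μ = finrank ℂ (f.maxGenEigenspace μ) := fun μ => by
    rw [Polynomial.count_roots, LinearMap.finrank_maxGenEigenspace_eq]
  obtain ⟨t, ht⟩ := f.charpoly.roots.exists_eq_add_map_of_count_eq (f := conj)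
    (Function.involutive_iff_iter_2_eq_id.mpr (by ext; simp))
    (fun μ => by rw [hcount, hcount, finrank_maxGenEigenspace_conj hσ hf])
    (fun μ hμ => by
      rw [hcount, ← Complex.conj_eq_iff_re.mp hμ]
      exact even_finrank_maxGenEigenspace_ofReal hσ hf _)
  rw [Module.End.det_eq_prod_roots_charpoly_of_splits (IsAlgClosed.splits _), ht,
    Multiset.prod_add, ← map_multiset_prod, Complex.mul_conj]
  exact Complex.zero_le_real.mpr (Complex.normSq_nonneg _)

end Antilinear

section QuaternionType

variable (ι : Type*)

def quaternionicConj : (ι ⊕ ι → ℂ) →ₗ⋆[ℂ] (ι ⊕ ι → ℂ) where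
  toFun u := Sum.elim (fun i => -conj (u (.inr i))) (fun i => conj (u (.inl i)))
  map_add' u v := by ext (i | i) <;> simp [add_comm]
  map_smul' c u := by ext (i | i) <;> simp

variable {ι}

@[simp] lemma quaternionicConj_inl (u : ι ⊕ ι → ℂ) (i : ι) :
    quaternionicConj ι u (.inl i) = -conj (u (.inr i)) := rfl

@[simp] lemma quaternionicConj_inr (u : ι ⊕ ι → ℂ) (i : ι) :
    quaternionicConj ι u (.inr i) = conj (u (.inl i)) := rfl

lemma quaternionicConj_quaternionicConj (u : ι ⊕ ι → ℂ) :
    quaternionicConj ι (quaternionicConj ι u) = -u := by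
  ext (i | i) <;> simp

lemma quaternionicConj_fromBlocks_mulVec [Fintype ι] (Z W : Matrix ι ι ℂ) (u : ι ⊕ ι → ℂ) :
    quaternionicConj ι (fromBlocks Z W (-W.map conj) (Z.map conj) *ᵥ u) =
      fromBlocks Z W (-W.map conj) (Z.map conj) *ᵥ quaternionicConj ι u := by
  ext (i | i) <;> simp [fromBlocks_mulVec, mulVec, dotProduct, add_comm]

end QuaternionType

theorem stmt_17_general (m : ℕ) (Z W : Matrix (Fin m) (Fin m) ℂ)
    (S : Matrix (Fin m ⊕ Fin m) (Fin m ⊕ Fin m) ℂ)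
    (hS : S = Matrix.fromBlocks Z W (-(W.map (starRingEnd ℂ))) (Z.map (starRingEnd ℂ))) :
    S.det.im = 0 ∧ 0 ≤ S.det.re := by
  have h := LinearMap.det_nonneg_of_commute_antilinear (f := toLin' S)
    quaternionicConj_quaternionicConj (hS ▸ quaternionicConj_fromBlocks_mulVec Z W)
  obtain ⟨hre, him⟩ := Complex.nonneg_iff.mp (LinearMap.det_toLin' S ▸ h)
  exact ⟨him.symm, hre⟩

/-- The determinant of a complex `2m × 2m` matrix of quaternion type
`S = [[Z, W], [-W̄, Z̄]]` is a nonnegative real number. -/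
theorem stmt_17 (m : ℕ) (hm : 1 ≤ m) (Z W : Matrix (Fin m) (Fin m) ℂ)
    (S : Matrix (Fin m ⊕ Fin m) (Fin m ⊕ Fin m) ℂ)
    (hS : S = Matrix.fromBlocks Z W (-(W.map (starRingEnd ℂ))) (Z.map (starRingEnd ℂ))) :
    S.det.im = 0 ∧ 0 ≤ S.det.re :=
  stmt_17_general m Z W S hS
end

section
/- Fix n ≥ 1 and let V be the n-dimensional real vector space of real polynomials of degree < n, equipped with the truncated multiplication p∘q := (p·q) mod tⁿ (discard all terms of degree ≥ n). Define the bilinear form γ on V by γ(p,q) := -Σ_{k=0}^{n-1} coeff_k(p·q), i.e. γ(p,q) = -(p∘q)(1). Then: (i) ∘ is commutative and associative with unit element the constant polynomial 1 (so V is a unital real Jordan algebra); (ii) γ is a symmetric bilinear form satisfying γ(p∘q, r) = γ(p, q∘r) for all p,q,r ∈ V; (iii) γ is nondegenerate. -/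
open Polynomial

/-- The truncated multiplication `p ∘ q = (p·q) mod tⁿ` on the space of real polynomials of
degree `< n`. -/
noncomputable def truncMul (n : ℕ) (p q : Polynomial.degreeLT ℝ n) :
    Polynomial.degreeLT ℝ n :=
  ⟨((p : ℝ[X]) * (q : ℝ[X])) %ₘ (X ^ n), by
    rw [Polynomial.mem_degreeLT]
    simpa [Polynomial.degree_X_pow] using
      Polynomial.degree_modByMonic_lt ((p : ℝ[X]) * (q : ℝ[X])) (Polynomial.monic_X_pow n)⟩

/-- The bilinear form `γ(p,q) = -Σ_{k<n} coeff_k(p·q)` on the space of real polynomials of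
degree `< n`. -/
noncomputable def truncGamma (n : ℕ) (p q : Polynomial.degreeLT ℝ n) : ℝ :=
  -∑ k ∈ Finset.range n, ((p : ℝ[X]) * (q : ℝ[X])).coeff k

/-!
Truncation is reduction modulo the ideal `(Xⁿ)`, so `∘` is the multiplication of `ℝ[X]/(Xⁿ)`
and inherits commutativity, associativity and the unit. Since `γ(p,q) = -(p∘q)(1)`, the trace
identity is associativity of `∘`. For nondegeneracy, pairing `p` with `X ^ (n - m)` gives minus
the partial sum `Σ_{k<m} coeff_k p`, so every coefficient of `p` is a difference of vanishing
partial sums.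
-/

namespace Polynomial

section Ring

variable {R : Type*} [Ring R]

theorem coeff_modByMonic_X_pow_of_lt (p : R[X]) {n k : ℕ} (hk : k < n) :
    (p %ₘ X ^ n).coeff k = p.coeff k := by
  conv_rhs => rw [← modByMonic_add_div p (X ^ n)]
  rw [coeff_add, coeff_X_pow_mul', if_neg (by omega), add_zero]

theorem eval_one_modByMonic_X_pow (p : R[X]) (n : ℕ) :
    (p %ₘ X ^ n).eval 1 = ∑ k ∈ Finset.range n, p.coeff k := by
  conv_lhs => rw [← sum_modByMonic_coeff (p := p) (monic_X_pow n) (degree_X_pow_le n)]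
  simp only [eval_finsetSum, eval_monomial, one_pow, mul_one]
  rw [← Fin.sum_univ_eq_sum_range]
  exact Finset.sum_congr rfl fun k _ => coeff_modByMonic_X_pow_of_lt p k.isLt

end Ring

section CommRing

variable {R : Type*} [CommRing R] {q : R[X]}

theorem modByMonic_mul_modByMonic (hq : q.Monic) (p r : R[X]) :
    (p %ₘ q * r) %ₘ q = (p * r) %ₘ q :=
  modByMonic_eq_of_dvd_sub hq <| by
    rw [← sub_mul]
    exact (dvd_modByMonic_sub p q).mul_right r

theorem mul_modByMonic_modByMonic (hq : q.Monic) (p r : R[X]) :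
    (p * (r %ₘ q)) %ₘ q = (p * r) %ₘ q := by
  rw [mul_comm, modByMonic_mul_modByMonic hq, mul_comm]

end CommRing

theorem sum_range_coeff_mul_X_pow {R : Type*} [Semiring R] (p : R[X]) {n j : ℕ} (hj : j ≤ n) :
    ∑ k ∈ Finset.range n, (p * X ^ j).coeff k = ∑ k ∈ Finset.range (n - j), p.coeff k := by
  obtain ⟨m, rfl⟩ := Nat.exists_eq_add_of_le hj
  rw [Finset.sum_range_add, Nat.add_sub_cancel_left]
  have below : ∀ k ∈ Finset.range j, (p * X ^ j).coeff k = 0 := fun k hk => by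
    rw [coeff_mul_X_pow', if_neg (by simpa using hk)]
  simp only [Finset.sum_eq_zero below, zero_add, add_comm j, coeff_mul_X_pow]

end Polynomial

theorem eq_zero_of_sum_range_eq_zero {M : Type*} [AddCommGroup M] {c : ℕ → M} {n : ℕ}
    (h : ∀ m ≤ n, ∑ k ∈ Finset.range m, c k = 0) {k : ℕ} (hk : k < n) : c k = 0 := by
  simpa [Finset.sum_range_succ, h k hk.le] using h (k + 1) hk

section TruncatedPolynomials

variable {n : ℕ}

@[simp]
theorem coe_truncMul (p q : degreeLT ℝ n) :
    (truncMul n p q : ℝ[X]) = ((p : ℝ[X]) * (q : ℝ[X])) %ₘ X ^ n :=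
  rfl

theorem truncMul_comm (p q : degreeLT ℝ n) : truncMul n p q = truncMul n q p :=
  Subtype.ext <| by simp only [coe_truncMul, mul_comm]

theorem truncMul_assoc (p q r : degreeLT ℝ n) :
    truncMul n (truncMul n p q) r = truncMul n p (truncMul n q r) :=
  Subtype.ext <| by
    simp only [coe_truncMul, modByMonic_mul_modByMonic (monic_X_pow n),
      mul_modByMonic_modByMonic (monic_X_pow n), mul_assoc]

theorem one_truncMul (h : (1 : ℝ[X]) ∈ degreeLT ℝ n) (p : degreeLT ℝ n) :
    truncMul n ⟨1, h⟩ p = p :=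
  Subtype.ext <| by
    rw [coe_truncMul, one_mul, modByMonic_eq_self_iff (monic_X_pow n), degree_X_pow]
    exact mem_degreeLT.1 p.2

theorem truncGamma_eq_neg_eval_truncMul (p q : degreeLT ℝ n) :
    truncGamma n p q = -((truncMul n p q : ℝ[X]).eval 1) := by
  rw [coe_truncMul, eval_one_modByMonic_X_pow, truncGamma]

theorem truncGamma_comm (p q : degreeLT ℝ n) : truncGamma n p q = truncGamma n q p := by
  simp only [truncGamma, mul_comm]

theorem truncGamma_add_left (p p' q : degreeLT ℝ n) :
    truncGamma n (p + p') q = truncGamma n p q + truncGamma n p' q := by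
  simp only [truncGamma, Submodule.coe_add, add_mul, coeff_add, Finset.sum_add_distrib, neg_add]

theorem truncGamma_smul_left (c : ℝ) (p q : degreeLT ℝ n) :
    truncGamma n (c • p) q = c * truncGamma n p q := by
  simp only [truncGamma, Submodule.coe_smul, smul_mul_assoc, coeff_smul, smul_eq_mul,
    ← Finset.mul_sum, mul_neg]

theorem truncGamma_truncMul_left (p q r : degreeLT ℝ n) :
    truncGamma n (truncMul n p q) r = truncGamma n p (truncMul n q r) := by
  rw [truncGamma_eq_neg_eval_truncMul, truncGamma_eq_neg_eval_truncMul, truncMul_assoc]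

theorem eq_zero_of_forall_truncGamma_eq_zero (p : degreeLT ℝ n)
    (hp : ∀ q : degreeLT ℝ n, truncGamma n p q = 0) : p = 0 := by
  have partial_sums : ∀ m ≤ n, ∑ k ∈ Finset.range m, (p : ℝ[X]).coeff k = 0 := by
    intro m hm
    rcases m.eq_zero_or_pos with rfl | hm₀
    · exact Finset.sum_range_zero _
    have hX : (X ^ (n - m) : ℝ[X]) ∈ degreeLT ℝ n := by
      rw [mem_degreeLT, degree_X_pow]
      exact_mod_cast Nat.sub_lt (by omega) hm₀
    have := hp ⟨X ^ (n - m), hX⟩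
    rwa [truncGamma, neg_eq_zero, sum_range_coeff_mul_X_pow _ (Nat.sub_le n m),
      Nat.sub_sub_self hm] at this
  refine Subtype.ext <| Polynomial.ext fun k => ?_
  rcases lt_or_ge k n with hk | hk
  · exact eq_zero_of_sum_range_eq_zero partial_sums hk
  · exact coeff_eq_zero_of_degree_lt <| (mem_degreeLT.1 p.2).trans_le (by exact_mod_cast hk)

end TruncatedPolynomials

/-- The truncated multiplication on polynomials of degree `< n` is commutative
and associative with unit the constant polynomial `1`, and
`γ(p,q) = -Σ_{k<n} coeff_k(p·q) = -(p∘q)(1)` is a symmetric, bilinear, nondegenerate trace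
form for it. -/
theorem stmt_18 (n : ℕ) (hn : 1 ≤ n) :
    -- (i) commutativity, associativity, and unit element
    (∀ p q : Polynomial.degreeLT ℝ n, truncMul n p q = truncMul n q p)
    ∧ (∀ p q r : Polynomial.degreeLT ℝ n,
        truncMul n (truncMul n p q) r = truncMul n p (truncMul n q r))
    ∧ (∀ p : Polynomial.degreeLT ℝ n,
        truncMul n ⟨(1 : ℝ[X]), by
          rw [Polynomial.mem_degreeLT, Polynomial.degree_one]
          exact_mod_cast Nat.pos_of_ne_zero (by omega)⟩ p = p)
    -- `γ(p,q) = -(p∘q)(1)`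
    ∧ (∀ p q : Polynomial.degreeLT ℝ n,
        truncGamma n p q = -((truncMul n p q : ℝ[X]).eval 1))
    -- (ii) `γ` is a symmetric bilinear form and a trace form
    ∧ (∀ p q : Polynomial.degreeLT ℝ n, truncGamma n p q = truncGamma n q p)
    ∧ (∀ p p' q : Polynomial.degreeLT ℝ n,
        truncGamma n (p + p') q = truncGamma n p q + truncGamma n p' q)
    ∧ (∀ (c : ℝ) (p q : Polynomial.degreeLT ℝ n),
        truncGamma n (c • p) q = c * truncGamma n p q)
    ∧ (∀ p q r : Polynomial.degreeLT ℝ n,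
        truncGamma n (truncMul n p q) r = truncGamma n p (truncMul n q r))
    -- (iii) `γ` is nondegenerate
    ∧ (∀ p : Polynomial.degreeLT ℝ n,
        (∀ q : Polynomial.degreeLT ℝ n, truncGamma n p q = 0) → p = 0) :=
  ⟨truncMul_comm, truncMul_assoc, one_truncMul _, truncGamma_eq_neg_eval_truncMul,
    truncGamma_comm, truncGamma_add_left, truncGamma_smul_left, truncGamma_truncMul_left,
    eq_zero_of_forall_truncGamma_eq_zero⟩
end

section
/- Fix n ≥ 2 and let V be the n-dimensional real vector space of real polynomials of degree < n, equipped with the truncated multiplication p∘q := (p·q) mod tⁿ. For p ∈ V let L_p : V → V be the multiplication operator q ↦ p∘q. Then trace(L_p) = n·coeff_0(p), so the bilinear form g(p,q) := trace(L_{p∘q}) equals n·coeff_0(p)·coeff_0(q) and is degenerate. Hence (V, ∘) is a unital commutative associative (in particular Jordan) real algebra which is not semi-simple (its canonical bilinear form g is degenerate), even though it carries a nondegenerate trace form, contradicting Koecher's claim that a unital Jordan algebra with a nondegenerate trace form must be semi-simple. -/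
/-!
In the monomial basis `1, X, …, X ^ (n - 1)` the operator `L_p` is triangular with constant
diagonal `coeff₀(p)`, so `trace L_p = n·coeff₀(p)` and `X` lies in the radical of `g`.
The form `γ(p, q) = coeff_{n-1}(p q)` is associative because reduction mod `X ^ n` does not
change coefficients below `n`, so both sides equal `coeff_{n-1}(p q r)`; it is nondegenerate
because pairing with `X ^ (n - 1 - i)` reads off the `i`-th coefficient.
-/

open Polynomial

/-- The multiplication operator `L_p : q ↦ p ∘ q` as an ℝ-linear endomorphism. -/
noncomputable def truncMulOp (n : ℕ) (p : Polynomial.degreeLT ℝ n) :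
    Polynomial.degreeLT ℝ n →ₗ[ℝ] Polynomial.degreeLT ℝ n where
  toFun q := truncMul n p q
  map_add' q q' := by
    apply Subtype.ext
    show ((p : ℝ[X]) * ((q + q' : Polynomial.degreeLT ℝ n) : ℝ[X])) %ₘ (X ^ n) = _
    rw [Submodule.coe_add, mul_add, Polynomial.add_modByMonic]
    rfl
  map_smul' c q := by
    apply Subtype.ext
    show ((p : ℝ[X]) * ((c • q : Polynomial.degreeLT ℝ n) : ℝ[X])) %ₘ (X ^ n) = _
    rw [Submodule.coe_smul, mul_smul_comm, Polynomial.smul_modByMonic]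
    rfl

namespace Polynomial

theorem X_mem_degreeLT {R : Type*} [Semiring R] {n : ℕ} (hn : 1 < n) :
    (X : R[X]) ∈ degreeLT R n :=
  mem_degreeLT.2 <| degree_X_le.trans_lt <| by exact_mod_cast hn

variable {R : Type*} [Ring R] {n i : ℕ}

theorem coeff_modByMonic_X_pow_mul (hi : i < n) (f g : R[X]) :
    ((f %ₘ X ^ n) * g).coeff i = (f * g).coeff i := by
  rw [modByMonic_eq_sub_mul_div f (X ^ n), sub_mul, coeff_sub, mul_assoc, coeff_X_pow_mul',
    if_neg (not_le.2 hi), sub_zero]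

theorem coeff_modByMonic_X_pow (hi : i < n) (f : R[X]) : (f %ₘ X ^ n).coeff i = f.coeff i := by
  simpa using coeff_modByMonic_X_pow_mul hi f 1

end Polynomial

section TruncatedPolynomialAlgebra

variable {n : ℕ}

@[simp]
theorem truncMulOp_apply (p q : degreeLT ℝ n) : truncMulOp n p q = truncMul n p q :=
  rfl

theorem coeff_zero_truncMul (hn : 0 < n) (p q : degreeLT ℝ n) :
    (truncMul n p q : ℝ[X]).coeff 0 = (p : ℝ[X]).coeff 0 * (q : ℝ[X]).coeff 0 := by
  rw [coe_truncMul, coeff_modByMonic_X_pow hn, mul_coeff_zero]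

theorem trace_truncMulOp (p : degreeLT ℝ n) :
    LinearMap.trace ℝ (degreeLT ℝ n) (truncMulOp n p) = n * (p : ℝ[X]).coeff 0 := by
  have hdiag (i : Fin n) :
      LinearMap.toMatrix (degreeLT.basis ℝ n) (degreeLT.basis ℝ n) (truncMulOp n p) i i =
        (p : ℝ[X]).coeff 0 := by
    rw [LinearMap.toMatrix_apply, degreeLT.basis_repr, truncMulOp_apply, coe_truncMul,
      degreeLT.basis_val, coeff_modByMonic_X_pow i.isLt, coeff_mul_X_pow', if_pos le_rfl,
      Nat.sub_self]
  rw [LinearMap.trace_eq_matrix_trace ℝ (degreeLT.basis ℝ n), Matrix.trace]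
  simp [Matrix.diag, hdiag]

theorem trace_truncMulOp_truncMul (hn : 0 < n) (p q : degreeLT ℝ n) :
    LinearMap.trace ℝ (degreeLT ℝ n) (truncMulOp n (truncMul n p q)) =
      n * (p : ℝ[X]).coeff 0 * (q : ℝ[X]).coeff 0 := by
  rw [trace_truncMulOp, coeff_zero_truncMul hn, mul_assoc]

variable (n) in
noncomputable def truncTraceForm : LinearMap.BilinForm ℝ (degreeLT ℝ n) :=
  ((LinearMap.mul ℝ ℝ[X]).compl₁₂ (degreeLT ℝ n).subtype (degreeLT ℝ n).subtype).compr₂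
    (lcoeff ℝ (n - 1))

theorem truncTraceForm_apply (p q : degreeLT ℝ n) :
    truncTraceForm n p q = ((p : ℝ[X]) * (q : ℝ[X])).coeff (n - 1) :=
  rfl

theorem truncTraceForm_comm (p q : degreeLT ℝ n) :
    truncTraceForm n p q = truncTraceForm n q p := by
  rw [truncTraceForm_apply, truncTraceForm_apply, mul_comm]

theorem truncTraceForm_truncMul (hn : 0 < n) (p q r : degreeLT ℝ n) :
    truncTraceForm n (truncMul n p q) r = truncTraceForm n p (truncMul n q r) := by
  have hlt : n - 1 < n := by omega
  rw [truncTraceForm_apply, truncTraceForm_apply, coe_truncMul, coe_truncMul,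
    coeff_modByMonic_X_pow_mul hlt, mul_comm (p : ℝ[X]) (_ %ₘ _),
    coeff_modByMonic_X_pow_mul hlt]
  ring_nf

theorem truncTraceForm_separatingLeft : (truncTraceForm n).SeparatingLeft := by
  intro p hp
  refine (degreeLT.basis ℝ n).ext_elem fun i => ?_
  have hcoeff := hp (degreeLT.basis ℝ n i.rev)
  rw [truncTraceForm_apply, degreeLT.basis_val, coeff_mul_X_pow', Fin.val_rev,
    if_pos (by omega), (by omega : n - 1 - (n - (i + 1)) = i)] at hcoeff
  simpa using hcoeff

end TruncatedPolynomialAlgebra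

/-- On the truncated polynomial algebra of dimension `n ≥ 2`, the trace of
the multiplication operator `L_p` is `n·coeff₀(p)`, so the canonical bilinear form
`g(p,q) = trace(L_{p∘q}) = n·coeff₀(p)·coeff₀(q)` is degenerate; hence this unital
commutative associative (in particular Jordan) algebra is not semi-simple, even though it
carries a nondegenerate trace form. -/
theorem stmt_19 (n : ℕ) (hn : 2 ≤ n) :
    -- `trace(L_p) = n·coeff₀(p)`
    (∀ p : Polynomial.degreeLT ℝ n,
      LinearMap.trace ℝ (Polynomial.degreeLT ℝ n) (truncMulOp n p)
        = n * ((p : ℝ[X]).coeff 0))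
    -- hence `g(p,q) = trace(L_{p∘q}) = n·coeff₀(p)·coeff₀(q)`
    ∧ (∀ p q : Polynomial.degreeLT ℝ n,
        LinearMap.trace ℝ (Polynomial.degreeLT ℝ n) (truncMulOp n (truncMul n p q))
          = n * ((p : ℝ[X]).coeff 0) * ((q : ℝ[X]).coeff 0))
    -- `g` is degenerate: the algebra is not semi-simple
    ∧ (∃ p : Polynomial.degreeLT ℝ n, p ≠ 0 ∧ ∀ q : Polynomial.degreeLT ℝ n,
        LinearMap.trace ℝ (Polynomial.degreeLT ℝ n) (truncMulOp n (truncMul n p q)) = 0)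
    -- yet the algebra carries a nondegenerate trace form
    ∧ (∃ γ : Polynomial.degreeLT ℝ n → Polynomial.degreeLT ℝ n → ℝ,
        (∀ p q, γ p q = γ q p)
        ∧ (∀ p p' q, γ (p + p') q = γ p q + γ p' q)
        ∧ (∀ (c : ℝ) p q, γ (c • p) q = c * γ p q)
        ∧ (∀ p q r, γ (truncMul n p q) r = γ p (truncMul n q r))
        ∧ (∀ p, (∀ q, γ p q = 0) → p = 0)) := by
  have hn0 : 0 < n := by omega
  refine ⟨trace_truncMulOp, trace_truncMulOp_truncMul hn0, ?_, ?_⟩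
  · refine ⟨⟨X, X_mem_degreeLT hn⟩, fun h => X_ne_zero (congrArg Subtype.val h), fun q => ?_⟩
    rw [trace_truncMulOp_truncMul hn0, coeff_X_zero, mul_zero, zero_mul]
  · exact ⟨fun p q => truncTraceForm n p q, truncTraceForm_comm,
      fun p p' q => LinearMap.map_add₂ _ p p' q, fun c p q => LinearMap.map_smul₂ _ c p q,
      truncTraceForm_truncMul hn0, truncTraceForm_separatingLeft⟩
end
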